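/- arXiv:2407.03877 — 10 statements merged into one kernel-verified Lean document; each statement's English description precedes it below -/
import Mathlib

section
/- Let G be a finite graph, w nonnegative edge weights, and T_1,...,T_q ⊆ V candidate sets. For each i, let C_i be a minimum-weight edge set separating some vertex t_i ∈ T_i from ⋃_{j≠i} T_j, chosen so that w(C_i) is minimal over all choices of t_i ∈ T_i. Then w(⋃_{i=1}^q C_i) is at most twice the optimum of the Single-to-All problem, i.e., twice the minimum over choices of representatives t_i* ∈ T_i and edge sets C separating each t_i* from all of T_j (j ≠ i) of w(C). -/
open scoped Classical

/-!
Restrict a feasible Single-to-All cut `C*` to the edges leaving the component of `t*ᵢ` in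
`G - C*`. The restricted cut still isolates `t*ᵢ` from every other `Tⱼ`, so by minimality it
costs at least `w(Cᵢ)`. The components of the `t*ᵢ` are pairwise distinct, so each edge of `C*`
lies in at most two of the restricted cuts, one for each endpoint.
-/

namespace Finset

variable {ι α M : Type*} [DecidableEq α] [AddCommMonoid M]

theorem sum_sum_eq_sum_card_nsmul (s : Finset ι) (S : Finset α) (D : ι → Finset α)
    (hD : ∀ i ∈ s, D i ⊆ S) (w : α → M) :
    ∑ i ∈ s, ∑ e ∈ D i, w e = ∑ e ∈ S, #{i ∈ s | e ∈ D i} • w e := by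
  calc ∑ i ∈ s, ∑ e ∈ D i, w e = ∑ i ∈ s, ∑ e ∈ S, if e ∈ D i then w e else 0 :=
        sum_congr rfl fun i hi => by rw [sum_ite_mem, inter_eq_right.2 (hD i hi)]
    _ = ∑ e ∈ S, #{i ∈ s | e ∈ D i} • w e := by
        rw [sum_comm]
        exact sum_congr rfl fun e _ => by rw [← sum_filter, sum_const]

variable [PartialOrder M] [IsOrderedAddMonoid M]

theorem sum_biUnion_le_sum_sum (s : Finset ι) (D : ι → Finset α) {w : α → M}
    (hw : ∀ e ∈ s.biUnion D, 0 ≤ w e) :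
    ∑ e ∈ s.biUnion D, w e ≤ ∑ i ∈ s, ∑ e ∈ D i, w e := by
  rw [sum_sum_eq_sum_card_nsmul s _ D fun i hi => subset_biUnion_of_mem D hi]
  refine sum_le_sum fun e he => ?_
  obtain ⟨i, hi, hei⟩ := mem_biUnion.1 he
  calc w e = 1 • w e := (one_nsmul _).symm
    _ ≤ #{i ∈ s | e ∈ D i} • w e :=
        nsmul_le_nsmul_left (hw e he) (card_pos.2 ⟨i, mem_filter.2 ⟨hi, hei⟩⟩)

theorem sum_sum_le_nsmul_sum_of_card_le {s : Finset ι} {S : Finset α} {D : ι → Finset α}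
    (hD : ∀ i ∈ s, D i ⊆ S) {w : α → M} (hw : ∀ e ∈ S, 0 ≤ w e) {k : ℕ}
    (hk : ∀ e ∈ S, #{i ∈ s | e ∈ D i} ≤ k) :
    ∑ i ∈ s, ∑ e ∈ D i, w e ≤ k • ∑ e ∈ S, w e := by
  rw [sum_sum_eq_sum_card_nsmul s S D hD, smul_sum]
  exact sum_le_sum fun e he => nsmul_le_nsmul_left (hw e he) (hk e he)

end Finset

open Finset

namespace SimpleGraph

variable {V : Type*} (G : SimpleGraph V)

noncomputable def componentCut (C : Finset (Sym2 V)) (s : V) : Finset (Sym2 V) :=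
  {e ∈ C | ∃ v ∈ e, (G.deleteEdges C).Reachable s v}

variable {G}

theorem componentCut_subset (C : Finset (Sym2 V)) (s : V) : G.componentCut C s ⊆ C :=
  filter_subset _ _

theorem Reachable.of_deleteEdges_componentCut {C : Finset (Sym2 V)} {s v : V}
    (h : (G.deleteEdges (G.componentCut C s)).Reachable s v) :
    (G.deleteEdges C).Reachable s v := by
  rw [reachable_iff_reflTransGen] at h
  induction h with
  | refl => rfl
  | @tail x y _ hxy hsx =>
    rw [deleteEdges_adj] at hxy
    have hxy' : (G.deleteEdges C).Adj x y := by
      refine deleteEdges_adj.2 ⟨hxy.1, fun hmem => hxy.2 ?_⟩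
      exact mem_filter.2 ⟨hmem, x, Sym2.mem_mk_left x y, hsx⟩
    exact hsx.trans hxy'.reachable

variable {ι : Type*} [Fintype ι]

theorem card_filter_reachable_le_one {H : SimpleGraph V} {s : ι → V}
    (hs : Pairwise fun i j => ¬ H.Reachable (s i) (s j)) (x : V) :
    #{i | H.Reachable (s i) x} ≤ 1 :=
  card_le_one.2 fun i hi j hj => by
    by_contra hij
    exact hs hij ((mem_filter.1 hi).2.trans (mem_filter.1 hj).2.symm)

theorem card_filter_mem_componentCut_le_two [DecidableEq V] {C : Finset (Sym2 V)} {s : ι → V}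
    (hs : Pairwise fun i j => ¬ (G.deleteEdges C).Reachable (s i) (s j)) (e : Sym2 V) :
    #{i | e ∈ G.componentCut C (s i)} ≤ 2 := by
  induction e using Sym2.ind with | _ a b
  calc #{i | s(a, b) ∈ G.componentCut C (s i)}
      ≤ #(({i | (G.deleteEdges C).Reachable (s i) a} : Finset ι) ∪
          ({i | (G.deleteEdges C).Reachable (s i) b} : Finset ι)) := by
        refine card_le_card fun i hi => ?_
        obtain ⟨-, v, hv, hsv⟩ := mem_filter.1 (mem_filter.1 hi).2
        rcases Sym2.mem_iff.1 hv with rfl | rfl <;> simp [hsv]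
    _ ≤ 1 + 1 := (card_union_le _ _).trans
        (add_le_add (card_filter_reachable_le_one hs a) (card_filter_reachable_le_one hs b))

end SimpleGraph

open SimpleGraph

theorem stmt1_general {V : Type*} [DecidableEq V] (G : SimpleGraph V)
    (w : Sym2 V → ℝ) (hw : ∀ e, 0 ≤ w e)
    (q : ℕ) (T : Fin q → Set V)
    (C : Fin q → Finset (Sym2 V))
    (hmin : ∀ i, ∀ t' ∈ T i, ∀ C' : Finset (Sym2 V), ↑C' ⊆ G.edgeSet →
      (∀ j, j ≠ i → ∀ v ∈ T j, ¬ (G.deleteEdges (↑C' : Set (Sym2 V))).Reachable t' v) →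
      ∑ e ∈ C i, w e ≤ ∑ e ∈ C', w e)
    -- any feasible Single-to-All solution (t*, C*)
    (tstar : Fin q → V) (Cstar : Finset (Sym2 V))
    (htstar : ∀ i, tstar i ∈ T i) (hCstar : ↑Cstar ⊆ G.edgeSet)
    (hsepstar : ∀ i j, i ≠ j → ∀ v ∈ T j,
      ¬ (G.deleteEdges ↑Cstar).Reachable (tstar i) v) :
    ∑ e ∈ Finset.univ.biUnion C, w e ≤ 2 * ∑ e ∈ Cstar, w e := by
  have hfeas (i : Fin q) : ∑ e ∈ C i, w e ≤ ∑ e ∈ G.componentCut Cstar (tstar i), w e :=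
    hmin i _ (htstar i) _ ((coe_subset.2 (componentCut_subset _ _)).trans hCstar)
      fun j hji v hv h => hsepstar i j (Ne.symm hji) v hv h.of_deleteEdges_componentCut
  have hcount (e : Sym2 V) : #{i | e ∈ G.componentCut Cstar (tstar i)} ≤ 2 :=
    card_filter_mem_componentCut_le_two (fun i j hij => hsepstar i j hij _ (htstar j)) e
  calc ∑ e ∈ Finset.univ.biUnion C, w e ≤ ∑ i, ∑ e ∈ C i, w e :=
        sum_biUnion_le_sum_sum _ _ fun e _ => hw e
    _ ≤ ∑ i, ∑ e ∈ G.componentCut Cstar (tstar i), w e := sum_le_sum fun i _ => hfeas i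
    _ ≤ 2 • ∑ e ∈ Cstar, w e := sum_sum_le_nsmul_sum_of_card_le
        (fun i _ => componentCut_subset _ _) (fun e _ => hw e) (fun e _ => hcount e)
    _ = 2 * ∑ e ∈ Cstar, w e := (two_nsmul _).trans (two_mul _).symm

/-- The union of cheapest isolating cuts (one per candidate set, over the best
choice of representative) is a 2-approximation for Single-to-All. -/
theorem stmt1 {V : Type*} [Fintype V] [DecidableEq V] (G : SimpleGraph V)
    (w : Sym2 V → ℝ) (hw : ∀ e, 0 ≤ w e)
    (q : ℕ) (T : Fin q → Set V)
    (t : Fin q → V) (C : Fin q → Finset (Sym2 V))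
    (ht : ∀ i, t i ∈ T i)
    (hCsub : ∀ i, ↑(C i) ⊆ G.edgeSet)
    (hsep : ∀ i j, j ≠ i → ∀ v ∈ T j, ¬ (G.deleteEdges ↑(C i)).Reachable (t i) v)
    (hmin : ∀ i, ∀ t' ∈ T i, ∀ C' : Finset (Sym2 V), ↑C' ⊆ G.edgeSet →
      (∀ j, j ≠ i → ∀ v ∈ T j, ¬ (G.deleteEdges (↑C' : Set (Sym2 V))).Reachable t' v) →
      ∑ e ∈ C i, w e ≤ ∑ e ∈ C', w e)
    -- any feasible Single-to-All solution (t*, C*)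
    (tstar : Fin q → V) (Cstar : Finset (Sym2 V))
    (htstar : ∀ i, tstar i ∈ T i) (hCstar : ↑Cstar ⊆ G.edgeSet)
    (hsepstar : ∀ i j, i ≠ j → ∀ v ∈ T j,
      ¬ (G.deleteEdges ↑Cstar).Reachable (tstar i) v) :
    ∑ e ∈ Finset.univ.biUnion C, w e ≤ 2 * ∑ e ∈ Cstar, w e :=
  stmt1_general G w hw q T C hmin tstar Cstar htstar hCstar hsepstar
end

section
/- Let G = (V,E) be a finite tree with root r, oriented toward r, and for each candidate set T_i (i ∈ [q]) add a new source node s_i with arcs from s_i to every element of T_i; let D be the resulting digraph and M the gammoid on ground set V with sources S = {s_1,...,s_q}. Then for Z ⊆ V \ {r}, the edge set C = {e(v) : v ∈ Z} (where e(v) is the unique tree edge leaving v toward r) is a good cut — i.e., there exist distinct indices i_1,...,i_{|Z|+1} and representatives t_{i_m} ∈ T_{i_m} lying in pairwise distinct components of G − C, one per component of G − C — if and only if Z ∪ {r} is independent in M. -/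
/-
Deleting the edges `e(v) = s(v, parent v)`, `v ∈ Z`, splits the tree into components, and each
component contains exactly one vertex of `Z ∪ {r}`: the first vertex of `Z ∪ {r}` met when
walking from any of its vertices towards `r` (`anchor`). The walk up stops before it could cross
a cut edge, and in a tree an edge `{u, w}` with `w` farther from `r` is `e(w)`, so `anchor` is
constant on components.

A gammoid path onto `x ∈ Z ∪ {r}` is an arc `s_i → t` with `t ∈ T_i`, followed by the tree path
from `t` up to `x`. Disjointness from the path onto `z ∈ Z`, which ends at `z`, keeps it off `Z`
before `x`, so `t` lies in the component of `x`. Conversely, a representative `t ∈ T_i` of the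
component of `x` yields such a path by walking up from `t`. Matching each component with its
anchor thus turns distinct representatives into disjoint paths and back.
-/

open SimpleGraph Sum

theorem SimpleGraph.IsTree.eq_of_adj_of_dist_add_one {V : Type*} {G : SimpleGraph V}
    (hG : G.IsTree) {r u u' w : V} (hu : G.Adj u w) (hu' : G.Adj u' w)
    (h : G.dist r u + 1 = G.dist r w) (h' : G.dist r u' + 1 = G.dist r w) : u = u' := by
  obtain ⟨p, hp⟩ := hG.connected.exists_walk_length_eq_dist r u
  obtain ⟨p', hp'⟩ := hG.connected.exists_walk_length_eq_dist r u'
  have hpath : (p.concat hu).IsPath := (p.concat hu).isPath_of_length_eq_dist (by simp [hp, h])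
  have hpath' : (p'.concat hu').IsPath :=
    (p'.concat hu').isPath_of_length_eq_dist (by simp [hp', h'])
  exact (Walk.concat_inj (congrArg Subtype.val
    ((hG.isAcyclic.subsingleton_path r w).elim ⟨_, hpath⟩ ⟨_, hpath'⟩))).1

namespace TreeGammoid

variable {V : Type*}

def IsParentMap (G : SimpleGraph V) (r : V) (parent : V → V) : Prop :=
  ∀ v, v ≠ r → G.Adj v (parent v) ∧ G.dist (parent v) r + 1 = G.dist v r

/-- The digraph `D`, with the source `s_i` encoded as `inr i`. -/
inductive Arc {ι : Type*} (r : V) (parent : V → V) (T : ι → Set V) : V ⊕ ι → V ⊕ ι → Prop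
  | up {v : V} : v ≠ r → Arc r parent T (inl v) (inl (parent v))
  | source {i : ι} {v : V} : v ∈ T i → Arc r parent T (inr i) (inl v)

section Arc

variable {r : V} {parent : V → V} {ι : Type*} {T : ι → Set V}

theorem arc_iff {a b : V ⊕ ι} : Arc r parent T a b ↔
    (∃ v, v ≠ r ∧ a = inl v ∧ b = inl (parent v)) ∨ (∃ i, ∃ v ∈ T i, a = inr i ∧ b = inl v) := by
  constructor
  · rintro (⟨hv⟩ | ⟨hv⟩)
    exacts [Or.inl ⟨_, hv, rfl, rfl⟩, Or.inr ⟨_, _, hv, rfl, rfl⟩]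
  · rintro (⟨v, hv, rfl, rfl⟩ | ⟨i, v, hv, rfl, rfl⟩)
    exacts [.up hv, .source hv]

theorem arc_inl_inl_iff {a b : V} : Arc r parent T (inl a) (inl b) ↔ a ≠ r ∧ b = parent a :=
  ⟨by rintro ⟨h⟩; exact ⟨h, rfl⟩, fun ⟨h, hb⟩ => hb ▸ .up h⟩

theorem exists_eq_map_inl_of_isChain_arc {w : V} {m : List (V ⊕ ι)}
    (h : (inl w :: m).IsChain (Arc r parent T)) : ∃ l : List V, m = l.map inl := by
  induction m generalizing w with
  | nil => exact ⟨[], rfl⟩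
  | cons b m ih =>
    rw [List.isChain_cons_cons] at h
    obtain ⟨hb, h⟩ := h
    cases hb
    obtain ⟨l, rfl⟩ := ih h
    exact ⟨parent w :: l, rfl⟩

theorem exists_eq_cons_of_isChain_arc {m : List (V ⊕ ι)} (hm : m.IsChain (Arc r parent T))
    {i : ι} {x : V} (hhead : m.head? = some (inr i)) (hlast : m.getLast? = some (inl x)) :
    ∃ w ∈ T i, ∃ l : List V, m = inr i :: (w :: l).map inl ∧ (w :: l).getLast? = some x ∧
      (w :: l).IsChain fun a b => a ≠ r ∧ b = parent a := by
  obtain ⟨_ | ⟨b, m⟩, rfl⟩ := List.head?_eq_some_iff.mp hhead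
  · simp at hlast
  rw [List.isChain_cons_cons] at hm
  obtain ⟨hb, hm⟩ := hm
  cases hb with | source hw =>
  obtain ⟨l, rfl⟩ := exists_eq_map_inl_of_isChain_arc hm
  refine ⟨_, hw, l, rfl, ?_, ?_⟩
  · rw [List.getLast?_cons_cons, ← List.map_cons, List.getLast?_map] at hlast
    simpa using hlast
  · rwa [← List.map_cons, List.isChain_map, List.IsChain.iff fun a b => arc_inl_inl_iff] at hm

end Arc

def HasComponentSDR {ι : Type*} (H : SimpleGraph V) (T : ι → Set V) : Prop :=
  ∃ idx : H.ConnectedComponent → ι, Function.Injective idx ∧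
    ∃ rep : H.ConnectedComponent → V, ∀ K, rep K ∈ T (idx K) ∧ rep K ∈ K.supp

def GammoidIndep {ι : Type*} (A : V ⊕ ι → V ⊕ ι → Prop) (X : Finset V) : Prop :=
  ∃ P : V → List (V ⊕ ι),
    (∀ x ∈ X, (P x).IsChain A ∧ (∃ i, (P x).head? = some (inr i)) ∧
      (P x).getLast? = some (inl x)) ∧
    ∀ x ∈ X, ∀ y ∈ X, x ≠ y → ∀ a ∈ P x, a ∉ P y

namespace IsParentMap

variable {G : SimpleGraph V} {r : V} {parent : V → V}

theorem parent_eq_of_adj (hpar : IsParentMap G r parent) (hG : G.IsTree) {u w : V}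
    (h : G.Adj u w) (hle : G.dist u r ≤ G.dist w r) : w ≠ r ∧ parent w = u := by
  have hdist : G.dist r w = G.dist r u + 1 := by
    have := hG.dist_eq_dist_add_one_of_adj r h
    rw [dist_comm, G.dist_comm (u := w)] at hle
    omega
  have hwr : w ≠ r := by
    rintro rfl
    simp at hdist
  obtain ⟨hadj, hd⟩ := hpar w hwr
  refine ⟨hwr, hG.eq_of_adj_of_dist_add_one hadj.symm h ?_ hdist.symm⟩
  rw [dist_comm, hd, dist_comm]

theorem eq_of_edge_eq (hpar : IsParentMap G r parent) {a b : V} (ha : a ≠ r) (hb : b ≠ r)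
    (h : s(a, parent a) = s(b, parent b)) : a = b := by
  rcases Sym2.eq_iff.mp h with ⟨hab, -⟩ | ⟨hab, hba⟩
  · exact hab
  · have da := (hpar a ha).2
    have db := (hpar b hb).2
    rw [hba] at da
    rw [← hab] at db
    omega

end IsParentMap

variable [DecidableEq V]

/-- `G - C` for the cut `C = {e(v) : v ∈ Z}`, where `e(v) = s(v, parent v)`. -/
abbrev cutGraph (G : SimpleGraph V) (parent : V → V) (Z : Finset V) : SimpleGraph V :=
  G.deleteEdges ↑(Z.image fun v => s(v, parent v))

variable {G : SimpleGraph V} {r : V} {parent : V → V}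

theorem IsParentMap.cutGraph_adj_parent_iff (hpar : IsParentMap G r parent) {Z : Finset V}
    (hZ : r ∉ Z) {v : V} (hv : v ≠ r) : (cutGraph G parent Z).Adj v (parent v) ↔ v ∉ Z := by
  have hmem : ∀ z ∈ Z, s(z, parent z) = s(v, parent v) → z = v := fun z hz =>
    hpar.eq_of_edge_eq (ne_of_mem_of_not_mem hz hZ) hv
  simp only [deleteEdges_adj, (hpar v hv).1, true_and, Finset.coe_image, Set.mem_image,
    Finset.mem_coe, not_exists, not_and]
  exact ⟨fun h hvZ => h v hvZ rfl, fun h z hz he => h (hmem z hz he ▸ hz)⟩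

noncomputable def climb (hpar : IsParentMap G r parent) (Z : Finset V) (u : V) : List V :=
  if u ∈ insert r Z then [u] else u :: climb hpar Z (parent u)
termination_by G.dist u r
decreasing_by
  have := (hpar u (by simp_all)).2
  omega

section Climb

variable (hpar : IsParentMap G r parent) (Z : Finset V)

theorem climb_of_mem {u : V} (hu : u ∈ insert r Z) : climb hpar Z u = [u] := by
  rw [climb, if_pos hu]

theorem climb_of_notMem {u : V} (hu : u ∉ insert r Z) :
    climb hpar Z u = u :: climb hpar Z (parent u) := by
  rw [climb, if_neg hu]

theorem head?_climb (u : V) : (climb hpar Z u).head? = some u := by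
  by_cases hu : u ∈ insert r Z
  · rw [climb_of_mem hpar Z hu]; rfl
  · rw [climb_of_notMem hpar Z hu]; rfl

theorem climb_ne_nil (u : V) : climb hpar Z u ≠ [] := by
  simpa using congrArg Option.isSome (head?_climb hpar Z u)

theorem isChain_climb (u : V) :
    (climb hpar Z u).IsChain fun a b => a ∉ insert r Z ∧ b = parent a := by
  fun_induction climb hpar Z u with
  | case1 u hu => exact .singleton u
  | case2 u hu ih =>
    rw [List.isChain_cons, head?_climb]
    exact ⟨fun b hb => ⟨hu, (Option.some_inj.mp hb).symm⟩, ih⟩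

theorem getLast_climb_mem (u : V) :
    (climb hpar Z u).getLast (climb_ne_nil hpar Z u) ∈ insert r Z := by
  fun_induction climb hpar Z u with
  | case1 u hu => simpa only [climb_of_mem hpar Z hu, List.getLast_singleton]
  | case2 u hu ih =>
    simpa only [climb_of_notMem hpar Z hu, List.getLast_cons (climb_ne_nil hpar Z _)]

end Climb

noncomputable def anchor (hpar : IsParentMap G r parent) (Z : Finset V) (u : V) : V :=
  (climb hpar Z u).getLast (climb_ne_nil hpar Z u)

section Anchor

variable (hpar : IsParentMap G r parent) (Z : Finset V)

theorem anchor_mem (u : V) : anchor hpar Z u ∈ insert r Z :=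
  getLast_climb_mem hpar Z u

theorem anchor_of_mem {u : V} (hu : u ∈ insert r Z) : anchor hpar Z u = u := by
  simp only [anchor, climb_of_mem hpar Z hu, List.getLast_singleton]

theorem anchor_parent {u : V} (hu : u ∉ insert r Z) :
    anchor hpar Z (parent u) = anchor hpar Z u := by
  simp only [anchor, climb_of_notMem hpar Z hu, List.getLast_cons (climb_ne_nil hpar Z _)]

theorem getLast?_climb (u : V) : (climb hpar Z u).getLast? = some (anchor hpar Z u) :=
  List.getLast?_eq_some_getLast _

theorem anchor_of_mem_climb {u a : V} (ha : a ∈ climb hpar Z u) :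
    anchor hpar Z a = anchor hpar Z u := by
  refine (isChain_climb hpar Z u).backwards_induction (fun a => anchor hpar Z a = anchor hpar Z u)
    _ ?_ (fun _ => anchor_of_mem hpar Z (anchor_mem hpar Z u)) a ha
  rintro a _ ⟨ha, rfl⟩ h
  rwa [← anchor_parent hpar Z ha]

theorem cutGraph_reachable_anchor (hZ : r ∉ Z) (u : V) :
    (cutGraph G parent Z).Reachable u (anchor hpar Z u) := by
  refine (isChain_climb hpar Z u).backwards_induction
    (fun a => (cutGraph G parent Z).Reachable a (anchor hpar Z u)) _ ?_
    (fun _ => .refl _) u (List.mem_of_mem_head? (head?_climb hpar Z u))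
  rintro a _ ⟨ha, rfl⟩ h
  have ha' : a ≠ r ∧ a ∉ Z := by simpa [not_or] using ha
  exact ((hpar.cutGraph_adj_parent_iff hZ ha'.1).2 ha'.2).reachable.trans h

end Anchor

section Tree

variable {Z : Finset V}

theorem anchor_eq_of_cutGraph_adj (hpar : IsParentMap G r parent) (hG : G.IsTree)
    (hZ : r ∉ Z) {u w : V} (h : (cutGraph G parent Z).Adj u w) :
    anchor hpar Z u = anchor hpar Z w := by
  wlog hle : G.dist u r ≤ G.dist w r generalizing u w
  · exact (this h.symm (le_of_not_ge hle)).symm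
  obtain ⟨hwr, rfl⟩ := hpar.parent_eq_of_adj hG (deleteEdges_le _ h) hle
  have hwZ : w ∉ Z := (hpar.cutGraph_adj_parent_iff hZ hwr).1 h.symm
  exact anchor_parent hpar Z (by simp [hwr, hwZ])

theorem anchor_eq_of_cutGraph_reachable (hpar : IsParentMap G r parent) (hG : G.IsTree)
    (hZ : r ∉ Z) {u w : V} (h : (cutGraph G parent Z).Reachable u w) :
    anchor hpar Z u = anchor hpar Z w := by
  obtain ⟨p⟩ := h
  induction p with
  | nil => rfl
  | cons hadj _ ih => exact (anchor_eq_of_cutGraph_adj hpar hG hZ hadj).trans ih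

theorem connectedComponentMk_eq_iff (hpar : IsParentMap G r parent) (hG : G.IsTree)
    (hZ : r ∉ Z) {u w : V} :
    (cutGraph G parent Z).connectedComponentMk u = (cutGraph G parent Z).connectedComponentMk w ↔
      anchor hpar Z u = anchor hpar Z w := by
  refine ⟨fun h => anchor_eq_of_cutGraph_reachable hpar hG hZ (ConnectedComponent.exact h),
    fun h => ConnectedComponent.sound ?_⟩
  exact (cutGraph_reachable_anchor hpar Z hZ u).trans
    (h ▸ (cutGraph_reachable_anchor hpar Z hZ w).symm)

end Tree

theorem anchor_eq_of_isChain (hpar : IsParentMap G r parent) {Z : Finset V} {l : List V}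
    (hl : l.IsChain fun a b => a ≠ r ∧ b = parent a) {x : V} (hx : x ∈ insert r Z)
    (hlast : l.getLast? = some x) (hZl : ∀ a ∈ l, a ∈ Z → a = x) :
    ∀ a ∈ l, anchor hpar Z a = x := by
  refine (List.IsChain.iff_mem.mp hl).backwards_induction _ _ ?_ fun hne => ?_
  · rintro a _ ⟨ha, -, har, rfl⟩ h
    by_cases haZ : a ∈ Z
    · rw [hZl a ha haZ, anchor_of_mem hpar Z hx]
    · rwa [← anchor_parent hpar Z (by simp [har, haZ])]
  · rw [(List.getLast_eq_iff_getLast?_eq_some hne).mpr hlast, anchor_of_mem hpar Z hx]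

section Correspondence

variable {ι : Type*} {T : ι → Set V} {Z : Finset V}

theorem gammoidIndep_of_hasComponentSDR (hpar : IsParentMap G r parent) (hG : G.IsTree)
    (hZ : r ∉ Z) (h : HasComponentSDR (cutGraph G parent Z) T) :
    GammoidIndep (Arc r parent T) (insert r Z) := by
  obtain ⟨idx, hidx, rep, hrep⟩ := h
  set K := (cutGraph G parent Z).connectedComponentMk
  have hK : ∀ x ∈ insert r Z, ∀ y ∈ insert r Z, K x = K y → x = y := fun x hx y hy hxy => by
    rwa [connectedComponentMk_eq_iff hpar hG hZ, anchor_of_mem hpar Z hx,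
      anchor_of_mem hpar Z hy] at hxy
  have hanchor : ∀ x ∈ insert r Z, anchor hpar Z (rep (K x)) = x := fun x hx =>
    ((connectedComponentMk_eq_iff hpar hG hZ).1 (hrep (K x)).2).trans (anchor_of_mem hpar Z hx)
  refine ⟨fun x => inr (idx (K x)) :: (climb hpar Z (rep (K x))).map inl,
    fun x hx => ⟨?_, ⟨_, rfl⟩, ?_⟩, ?_⟩
  · rw [List.isChain_cons, List.head?_map, head?_climb, List.isChain_map]
    refine ⟨fun b hb => ?_, (isChain_climb hpar Z _).imp fun a b ⟨ha, hb⟩ => hb ▸ .up ?_⟩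
    · cases Option.some_inj.mp hb
      exact .source (hrep _).1
    · exact fun har => ha (har ▸ Finset.mem_insert_self r Z)
  · rw [List.getLast?_cons, List.getLast?_map, getLast?_climb, hanchor x hx]
    rfl
  · intro x hx y hy hxy a hax hay
    simp only [List.mem_cons, List.mem_map] at hax hay
    rcases hax with rfl | ⟨v, hv, rfl⟩ <;> rcases hay with hay | ⟨v', hv', hay⟩
    · exact hxy (hK x hx y hy (hidx (inr_injective hay)))
    · cases hay
    · cases hay
    · obtain rfl := inl_injective hay
      exact hxy ((hanchor x hx).symm.trans ((anchor_of_mem_climb hpar Z hv).symm.trans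
        ((anchor_of_mem_climb hpar Z hv').trans (hanchor y hy))))

theorem hasComponentSDR_of_gammoidIndep (hpar : IsParentMap G r parent) (hG : G.IsTree)
    (hZ : r ∉ Z) (h : GammoidIndep (Arc r parent T) (insert r Z)) :
    HasComponentSDR (cutGraph G parent Z) T := by
  obtain ⟨P, hP, hdisj⟩ := h
  have hsrc : ∀ x ∈ insert r Z,
      ∃ i, (P x).head? = some (inr i) ∧ ∃ w ∈ T i, anchor hpar Z w = x := by
    intro x hx
    obtain ⟨hchain, ⟨i, hhead⟩, hlast⟩ := hP x hx
    obtain ⟨w, hw, l, hPx, hl, hchain⟩ := exists_eq_cons_of_isChain_arc hchain hhead hlast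
    refine ⟨i, hhead, w, hw, anchor_eq_of_isChain hpar hchain hx hl (fun a ha haZ => ?_) w
      List.mem_cons_self⟩
    by_contra hax
    have haZ' : a ∈ insert r Z := Finset.mem_insert_of_mem haZ
    refine hdisj x hx a haZ' (Ne.symm hax) (inl a) ?_ (List.mem_of_getLast? (hP a haZ').2.2)
    rw [hPx]
    exact List.mem_cons_of_mem _ (List.mem_map_of_mem ha)
  let top : (cutGraph G parent Z).ConnectedComponent → V :=
    ConnectedComponent.lift (anchor hpar Z) fun _ _ p _ =>
      anchor_eq_of_cutGraph_reachable hpar hG hZ p.reachable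
  have htop : ∀ K, ∃ i, (P (top K)).head? = some (inr i) ∧ ∃ w ∈ T i, w ∈ K.supp :=
    ConnectedComponent.ind fun v => by
      obtain ⟨i, hi, w, hw, hwv⟩ := hsrc _ (anchor_mem hpar Z v)
      exact ⟨i, hi, w, hw, (connectedComponentMk_eq_iff hpar hG hZ).2 hwv⟩
  choose idx hhead rep hrep using htop
  refine ⟨idx, ConnectedComponent.ind₂ fun v w h => ?_, rep, hrep⟩
  rw [connectedComponentMk_eq_iff hpar hG hZ]
  by_contra hvw
  exact hdisj _ (anchor_mem hpar Z v) _ (anchor_mem hpar Z w) hvw _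
    (List.mem_of_mem_head? (hhead (.mk _ v)))
    (List.mem_of_mem_head? ((hhead (.mk _ w)).trans (congrArg (some ∘ inr) h.symm)))

end Correspondence

end TreeGammoid

open TreeGammoid in
theorem stmt2_general {V : Type*} [DecidableEq V]
    (G : SimpleGraph V) (hG : G.IsTree) (r : V)
    (q : ℕ) (T : Fin q → Set V)
    (parent : V → V)
    (hpar : ∀ v, v ≠ r → G.Adj v (parent v) ∧ G.dist (parent v) r + 1 = G.dist v r)
    (A : (V ⊕ Fin q) → (V ⊕ Fin q) → Prop)
    (hA : ∀ a b, A a b ↔ ((∃ v, v ≠ r ∧ a = Sum.inl v ∧ b = Sum.inl (parent v)) ∨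
        (∃ i, ∃ v ∈ T i, a = Sum.inr i ∧ b = Sum.inl v)))
    (Z : Finset V) (hZ : r ∉ Z) :
    -- the cut `{e(v) : v ∈ Z}` is good
    (∃ idx : (G.deleteEdges ↑(Z.image fun v => s(v, parent v))).ConnectedComponent → Fin q,
       Function.Injective idx ∧
       ∃ rep : (G.deleteEdges ↑(Z.image fun v => s(v, parent v))).ConnectedComponent → V,
         ∀ K, rep K ∈ T (idx K) ∧ rep K ∈ K.supp)
    ↔ -- `Z ∪ {r}` is independent in the gammoid `M = (D, S, V)`
    (∃ P : V → List (V ⊕ Fin q),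
        (∀ x ∈ insert r Z, List.Chain' A (P x) ∧
          (∃ i : Fin q, (P x).head? = some (Sum.inr i)) ∧
          (P x).getLast? = some (Sum.inl x)) ∧
        (∀ x ∈ insert r Z, ∀ y ∈ insert r Z, x ≠ y → ∀ a ∈ P x, a ∉ P y)) := by
  obtain rfl : A = Arc r parent T := funext₂ fun a b => propext ((hA a b).trans arc_iff.symm)
  exact ⟨gammoidIndep_of_hasComponentSDR hpar hG hZ, hasComponentSDR_of_gammoidIndep hpar hG hZ⟩

/-- Tree/gammoid correspondence: for a tree `G` rooted at `r` (edges oriented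
toward `r` via `parent`), with candidate sets `T i` and the auxiliary digraph `A`
(sources `Sum.inr i` with arcs into `T i`, and tree arcs `v → parent v`), a set
`Z ⊆ V \ {r}` induces a good cut `C = {e(v) : v ∈ Z}` — i.e. the components of
`G - C` admit representatives from pairwise distinct candidate sets, one per
component — if and only if `Z ∪ {r}` is independent in the gammoid, i.e. there
are pairwise vertex-disjoint directed paths from the sources onto `Z ∪ {r}`. -/
theorem stmt2 {V : Type*} [Fintype V] [DecidableEq V]
    (G : SimpleGraph V) (hG : G.IsTree) (r : V)
    (q : ℕ) (T : Fin q → Set V)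
    (parent : V → V)
    (hpar : ∀ v, v ≠ r → G.Adj v (parent v) ∧ G.dist (parent v) r + 1 = G.dist v r)
    (A : (V ⊕ Fin q) → (V ⊕ Fin q) → Prop)
    (hA : ∀ a b, A a b ↔ ((∃ v, v ≠ r ∧ a = Sum.inl v ∧ b = Sum.inl (parent v)) ∨
        (∃ i, ∃ v ∈ T i, a = Sum.inr i ∧ b = Sum.inl v)))
    (Z : Finset V) (hZ : r ∉ Z) :
    -- the cut `{e(v) : v ∈ Z}` is good
    (∃ idx : (G.deleteEdges ↑(Z.image fun v => s(v, parent v))).ConnectedComponent → Fin q,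
       Function.Injective idx ∧
       ∃ rep : (G.deleteEdges ↑(Z.image fun v => s(v, parent v))).ConnectedComponent → V,
         ∀ K, rep K ∈ T (idx K) ∧ rep K ∈ K.supp)
    ↔ -- `Z ∪ {r}` is independent in the gammoid `M = (D, S, V)`
    (∃ P : V → List (V ⊕ Fin q),
        (∀ x ∈ insert r Z, List.Chain' A (P x) ∧
          (∃ i : Fin q, (P x).head? = some (Sum.inr i)) ∧
          (P x).getLast? = some (Sum.inl x)) ∧
        (∀ x ∈ insert r Z, ∀ y ∈ insert r Z, x ≠ y → ∀ a ∈ P x, a ∉ P y)) :=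
  stmt2_general G hG r q T parent hpar A hA Z hZ
end

section
/- The collection of sets Z ∪ {r} arising from good cuts on a rooted tree forms the independent sets of a matroid (a gammoid), and hence the greedy algorithm that repeatedly adds the minimum-weight edge e with C + e still good computes a minimum-weight good cut of any prescribed size on trees. -/
open scoped Classical

/-- `Z ⊆ V \ {r}` induces a good cut `{s(v, parent v) : v ∈ Z}` on the rooted
tree: the components of the tree minus the cut admit representatives from
pairwise distinct candidate sets, one representative per component. -/
def GoodCut {V : Type*} [Fintype V] [DecidableEq V] (G : SimpleGraph V)
    {q : ℕ} (T : Fin q → Set V) (parent : V → V) (Z : Finset V) : Prop :=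
  ∃ idx : (G.deleteEdges ↑(Z.image fun v => s(v, parent v))).ConnectedComponent → Fin q,
    Function.Injective idx ∧
    ∃ rep : (G.deleteEdges ↑(Z.image fun v => s(v, parent v))).ConnectedComponent → V,
      ∀ K, rep K ∈ T (idx K) ∧ rep K ∈ K.supp

/-!
Cutting the parent edges `s(z, parent z)`, `z ∈ Z`, leaves one component for each vertex of
`insert r Z`, made of the vertices whose first ancestor in `insert r Z` is that vertex. By Hall's
theorem, `Z` is good iff for every vertex set `Y` the number of components inside `Y` is at most
the number of candidate sets meeting `Y`. The first count is supermodular in `Y`, the second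
submodular, and cutting one more edge `s(z, parent z)` raises the first count by one exactly when
one of the two halves of the split component lies in `Y`; Rado's tight-set argument for
transversal matroids then gives the exchange property.

For the greedy bound, induct on the size: the exchange property makes the last greedy edge no
heavier than the heaviest edge of a good cut of that size, and deleting that edge leaves a good
cut one smaller.
-/

open Finset

theorem Finset.ne_of_notMem_insert {α : Type*} [DecidableEq α] {s : Finset α} {a b : α}
    (h : a ∉ insert b s) : a ≠ b := by
  rintro rfl
  exact h (mem_insert_self a s)

theorem Finset.notMem_insert_union {α : Type*} [DecidableEq α] {r a : α} {Z K : Finset α}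
    (hrK : r ∉ insert a K) (hZK : Disjoint Z (insert a K)) (haK : a ∉ K) :
    a ∉ insert r (Z ∪ K) := by
  rw [mem_insert, mem_union, not_or, not_or]
  exact ⟨fun h => hrK (h ▸ mem_insert_self a K),
    fun h => disjoint_left.1 hZK h (mem_insert_self a K), haK⟩

namespace SimpleGraph

section ParentMap

variable {V : Type*}

def IsParentMap (G : SimpleGraph V) (r : V) (parent : V → V) : Prop :=
  ∀ v, v ≠ r → G.Adj v (parent v) ∧ G.dist (parent v) r + 1 = G.dist v r

/-- The first vertex of `insert r Z` on the way from `u` to the root; it labels the component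
of `u` once the edges `s(z, parent z)`, `z ∈ Z`, are cut. The distance test always succeeds for
a parent map and only serves termination. -/
noncomputable def cutTop [DecidableEq V] (G : SimpleGraph V) (r : V) (parent : V → V)
    (Z : Finset V) (u : V) : V :=
  if u ∈ insert r Z then u
  else if G.dist (parent u) r < G.dist u r then cutTop G r parent Z (parent u) else u
termination_by G.dist u r

def cutGraph [DecidableEq V] (G : SimpleGraph V) (parent : V → V) (Z : Finset V) :
    SimpleGraph V :=
  G.deleteEdges ↑(Z.image fun v => s(v, parent v))

variable {G : SimpleGraph V} {r : V} {parent : V → V}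

theorem IsParentMap.dist_parent_lt (hpar : G.IsParentMap r parent) {v : V} (hv : v ≠ r) :
    G.dist (parent v) r < G.dist v r := by
  have := (hpar v hv).2
  omega

theorem IsParentMap.induction (hpar : G.IsParentMap r parent) {P : V → Prop}
    (h : ∀ u, (u ≠ r → P (parent u)) → P u) (u : V) : P u := by
  induction hu : G.dist u r using Nat.strong_induction_on generalizing u with
  | _ n ih => exact h u fun hr => ih _ (hu ▸ hpar.dist_parent_lt hr) _ rfl

theorem IsParentMap.injOn_parentEdge (hpar : G.IsParentMap r parent) :
    Set.InjOn (fun v => s(v, parent v)) {v | v ≠ r} := by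
  intro a ha b hb hab
  rcases Sym2.eq_iff.1 hab with ⟨h, -⟩ | ⟨hab, hba⟩
  · exact h
  · have ha' := (hpar a ha).2
    have hb' := (hpar b hb).2
    rw [hba] at ha'
    rw [← hab] at hb'
    omega

variable [DecidableEq V] {Z Z' : Finset V} {u : V}

theorem cutTop_of_mem (h : u ∈ insert r Z) : G.cutTop r parent Z u = u := by
  rw [cutTop, if_pos h]

theorem IsParentMap.cutTop_of_notMem (hpar : G.IsParentMap r parent) (h : u ∉ insert r Z) :
    G.cutTop r parent Z u = G.cutTop r parent Z (parent u) := by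
  rw [cutTop, if_neg h, if_pos (hpar.dist_parent_lt (ne_of_notMem_insert h))]

theorem IsParentMap.cutTop_mem (hpar : G.IsParentMap r parent) (Z : Finset V) (u : V) :
    G.cutTop r parent Z u ∈ insert r Z := by
  induction u using hpar.induction with
  | h u ih =>
    by_cases hu : u ∈ insert r Z
    · rwa [cutTop_of_mem hu]
    · rw [hpar.cutTop_of_notMem hu]
      exact ih (ne_of_notMem_insert hu)

theorem IsParentMap.dist_cutTop_le (hpar : G.IsParentMap r parent) (Z : Finset V) (u : V) :
    G.dist (G.cutTop r parent Z u) r ≤ G.dist u r := by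
  induction u using hpar.induction with
  | h u ih =>
    by_cases hu : u ∈ insert r Z
    · rw [cutTop_of_mem hu]
    · have hur := ne_of_notMem_insert hu
      rw [hpar.cutTop_of_notMem hu]
      exact (ih hur).trans (hpar.dist_parent_lt hur).le

theorem IsParentMap.dist_cutTop_lt (hpar : G.IsParentMap r parent) (h : u ∉ insert r Z) :
    G.dist (G.cutTop r parent Z u) r < G.dist u r := by
  rw [hpar.cutTop_of_notMem h]
  exact (hpar.dist_cutTop_le Z _).trans_lt (hpar.dist_parent_lt (ne_of_notMem_insert h))

theorem IsParentMap.cutTop_cutTop (hpar : G.IsParentMap r parent) (hZ : Z ⊆ Z') (u : V) :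
    G.cutTop r parent Z (G.cutTop r parent Z' u) = G.cutTop r parent Z u := by
  induction u using hpar.induction with
  | h u ih =>
    by_cases hu : u ∈ insert r Z'
    · rw [cutTop_of_mem hu]
    · have hu' : u ∉ insert r Z := fun h => hu (insert_subset_insert r hZ h)
      rw [hpar.cutTop_of_notMem hu, hpar.cutTop_of_notMem hu']
      exact ih (ne_of_notMem_insert hu)

theorem IsParentMap.cutTop_insert (hpar : G.IsParentMap r parent) (z : V) (Z : Finset V)
    (u : V) : G.cutTop r parent (insert z Z) u = z ∨
      G.cutTop r parent (insert z Z) u = G.cutTop r parent Z u := by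
  refine or_iff_not_imp_left.2 fun hz => ?_
  have hmem : G.cutTop r parent (insert z Z) u ∈ insert r Z := by
    have := hpar.cutTop_mem (insert z Z) u
    simp only [mem_insert] at this ⊢
    tauto
  rw [← hpar.cutTop_cutTop (subset_insert z Z) u, cutTop_of_mem hmem]

theorem IsParentMap.parentEdge_mem_image_iff (hpar : G.IsParentMap r parent) (hrZ : r ∉ Z)
    {v : V} (hv : v ≠ r) : s(v, parent v) ∈ Z.image (fun z => s(z, parent z)) ↔ v ∈ Z := by
  refine ⟨fun h => ?_, mem_image_of_mem _⟩
  obtain ⟨z, hz, hzv⟩ := mem_image.1 h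
  rwa [← hpar.injOn_parentEdge (fun hzr : z = r => hrZ (hzr ▸ hz)) hv hzv]

theorem IsParentMap.reachable_cutTop (hpar : G.IsParentMap r parent) (hrZ : r ∉ Z) (u : V) :
    (G.cutGraph parent Z).Reachable u (G.cutTop r parent Z u) := by
  induction u using hpar.induction with
  | h u ih =>
    by_cases hu : u ∈ insert r Z
    · rw [cutTop_of_mem hu]
    · have hur := ne_of_notMem_insert hu
      have hadj : (G.cutGraph parent Z).Adj u (parent u) := by
        rw [cutGraph, deleteEdges_adj, mem_coe, hpar.parentEdge_mem_image_iff hrZ hur]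
        exact ⟨(hpar u hur).1, fun h => hu (mem_insert_of_mem h)⟩
      rw [hpar.cutTop_of_notMem hu]
      exact hadj.reachable.trans (ih hur)

end ParentMap

section Tree

variable {V : Type*} [Fintype V] [DecidableEq V] {G : SimpleGraph V} {r : V} {parent : V → V}
  {Z : Finset V}

/-- The `#V - 1` parent edges are distinct, and a tree has no more edges than that. -/
theorem IsParentMap.exists_parentEdge_eq (hpar : G.IsParentMap r parent) (hG : G.IsTree)
    {a b : V} (hab : G.Adj a b) : ∃ v ≠ r, s(v, parent v) = s(a, b) := by
  have hsub : (univ.erase r).image (fun v => s(v, parent v)) ⊆ G.edgeFinset := by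
    intro e he
    obtain ⟨v, hv, rfl⟩ := mem_image.1 he
    exact mem_edgeFinset.2 (hpar v (ne_of_mem_erase hv)).1
  have hcard : #G.edgeFinset ≤ #((univ.erase r).image fun v => s(v, parent v)) := by
    rw [card_image_of_injOn (hpar.injOn_parentEdge.mono fun v hv => ne_of_mem_erase hv),
      card_erase_of_mem (mem_univ r), card_univ]
    have := hG.card_edgeFinset
    omega
  have hmem : s(a, b) ∈ (univ.erase r).image fun v => s(v, parent v) := by
    rw [eq_of_subset_of_card_le hsub hcard]
    exact mem_edgeFinset.2 hab
  obtain ⟨v, hv, hve⟩ := mem_image.1 hmem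
  exact ⟨v, ne_of_mem_erase hv, hve⟩

theorem IsParentMap.cutTop_eq_of_adj (hpar : G.IsParentMap r parent) (hG : G.IsTree)
    {a b : V} (hab : (G.cutGraph parent Z).Adj a b) :
    G.cutTop r parent Z a = G.cutTop r parent Z b := by
  rw [cutGraph, deleteEdges_adj] at hab
  obtain ⟨v, hvr, hv⟩ := hpar.exists_parentEdge_eq hG hab.1
  have hvZ : v ∉ insert r Z := by
    rw [mem_insert, not_or]
    exact ⟨hvr, fun hvZ => hab.2 (hv ▸ mem_coe.2 (mem_image_of_mem _ hvZ))⟩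
  rcases Sym2.eq_iff.1 hv with ⟨rfl, rfl⟩ | ⟨rfl, rfl⟩
  · exact hpar.cutTop_of_notMem hvZ
  · exact (hpar.cutTop_of_notMem hvZ).symm

theorem IsParentMap.reachable_iff_cutTop_eq (hpar : G.IsParentMap r parent) (hG : G.IsTree)
    (hrZ : r ∉ Z) {a b : V} :
    (G.cutGraph parent Z).Reachable a b ↔ G.cutTop r parent Z a = G.cutTop r parent Z b := by
  refine ⟨fun h => ?_, fun h => ?_⟩
  · obtain ⟨p⟩ := h
    induction p with
    | nil => rfl
    | cons hadj _ ih => exact (hpar.cutTop_eq_of_adj hG hadj).trans ih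
  · exact (hpar.reachable_cutTop hrZ a).trans (h ▸ (hpar.reachable_cutTop hrZ b).symm)

end Tree

section Hall

variable {V ι : Type*} [Fintype ι]

noncomputable def candidatesMeeting (T : ι → Set V) (Y : Finset V) : Finset ι :=
  {i | ∃ u ∈ Y, u ∈ T i}

theorem exists_injective_componentRep_iff [Fintype V] (H : SimpleGraph V) (T : ι → Set V) :
    (∃ idx : H.ConnectedComponent → ι, Function.Injective idx ∧
      ∃ rep : H.ConnectedComponent → V, ∀ K, rep K ∈ T (idx K) ∧ rep K ∈ K.supp) ↔
    ∀ Y : Finset V, #{K : H.ConnectedComponent | K.supp ⊆ Y} ≤ #(candidatesMeeting T Y) := by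
  have hrep : (∃ idx : H.ConnectedComponent → ι, Function.Injective idx ∧
      ∃ rep : H.ConnectedComponent → V, ∀ K, rep K ∈ T (idx K) ∧ rep K ∈ K.supp) ↔
      ∃ idx : H.ConnectedComponent → ι, Function.Injective idx ∧
        ∀ K, ∃ u ∈ T (idx K), u ∈ K.supp := by
    refine exists_congr fun idx => and_congr_right fun _ => ⟨?_, fun h => ?_⟩
    · rintro ⟨rep, hrep⟩ K
      exact ⟨rep K, hrep K⟩
    · choose rep hrep using h
      exact ⟨rep, hrep⟩
  refine hrep.trans <| (Fintype.all_card_le_filter_rel_iff_exists_injective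
    (fun (K : H.ConnectedComponent) i => ∃ u ∈ T i, u ∈ K.supp)).symm.trans
      ⟨fun h Y => (h {K | K.supp ⊆ Y}).trans (card_le_card ?_), fun h A => ?_⟩
  · intro i
    simp only [candidatesMeeting, mem_filter, mem_univ, true_and]
    rintro ⟨K, hKY, u, hu, huK⟩
    exact ⟨u, hKY huK, hu⟩
  · refine (card_le_card ?_).trans
      ((h {u | H.connectedComponentMk u ∈ A}).trans (card_le_card ?_))
    · intro K hK
      simp only [mem_filter, mem_univ, true_and]
      intro u hu
      rw [mem_coe, mem_filter, (ConnectedComponent.mem_supp_iff K u).1 hu]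
      exact ⟨mem_univ u, hK⟩
    · intro i
      simp only [candidatesMeeting, mem_filter, mem_univ, true_and]
      rintro ⟨u, hu, huT⟩
      exact ⟨_, hu, u, huT, rfl⟩

theorem card_candidatesMeeting_union_add_inter_le [DecidableEq V] (T : ι → Set V)
    (A B : Finset V) :
    #(candidatesMeeting T (A ∪ B)) + #(candidatesMeeting T (A ∩ B)) ≤
      #(candidatesMeeting T A) + #(candidatesMeeting T B) := by
  have hunion :
      candidatesMeeting T (A ∪ B) = candidatesMeeting T A ∪ candidatesMeeting T B := by
    ext i
    simp [candidatesMeeting, or_and_right, exists_or]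
  have hinter :
      candidatesMeeting T (A ∩ B) ⊆ candidatesMeeting T A ∩ candidatesMeeting T B := by
    intro i
    simp only [candidatesMeeting, mem_filter, mem_univ, true_and, mem_inter]
    rintro ⟨u, ⟨huA, huB⟩, hT⟩
    exact ⟨⟨u, huA, hT⟩, ⟨u, huB, hT⟩⟩
  rw [hunion, ← card_union_add_card_inter (candidatesMeeting T A)]
  exact Nat.add_le_add_left (card_le_card hinter) _

end Hall

section Enclosed

variable {V : Type*} [Fintype V] [DecidableEq V] {G : SimpleGraph V} {r : V} {parent : V → V}
  {Z Z' : Finset V}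

noncomputable def enclosedTops (G : SimpleGraph V) (r : V) (parent : V → V) (Z Y : Finset V) :
    Finset V :=
  {v ∈ insert r Z | ∀ u, G.cutTop r parent Z u = v → u ∈ Y}

/-- Cutting `s(z, parent z)` splits the component of `z` into the part below `z`, with top `z`,
and the part above it, which keeps the old top; one of the two parts lies in `Y`. -/
def SplitsInside (G : SimpleGraph V) (r : V) (parent : V → V) (Z : Finset V) (z : V)
    (Y : Finset V) : Prop :=
  z ∈ G.enclosedTops r parent (insert z Z) Y ∨
    G.cutTop r parent Z z ∈ G.enclosedTops r parent (insert z Z) Y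

theorem IsParentMap.card_enclosedTops_eq (hpar : G.IsParentMap r parent)
    (hG : G.IsTree) (hrZ : r ∉ Z) (Y : Finset V) :
    #{K : (G.cutGraph parent Z).ConnectedComponent | K.supp ⊆ Y} =
      #(G.enclosedTops r parent Z Y) := by
  have hmk {a b : V} : (G.cutGraph parent Z).connectedComponentMk a =
      (G.cutGraph parent Z).connectedComponentMk b ↔
        G.cutTop r parent Z a = G.cutTop r parent Z b :=
    ConnectedComponent.eq.trans (hpar.reachable_iff_cutTop_eq hG hrZ)
  symm
  refine card_bij (fun v _ => (G.cutGraph parent Z).connectedComponentMk v) ?_ ?_ ?_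
  · intro v hv
    obtain ⟨hvZ, hvY⟩ := mem_filter.1 hv
    simp only [mem_filter, mem_univ, true_and]
    intro u hu
    rw [ConnectedComponent.mem_supp_iff, hmk, cutTop_of_mem hvZ] at hu
    exact hvY u hu
  · intro a ha b hb hab
    rwa [hmk, cutTop_of_mem (mem_filter.1 ha).1, cutTop_of_mem (mem_filter.1 hb).1] at hab
  · intro K hK
    induction K using ConnectedComponent.ind with | h u =>
    refine ⟨G.cutTop r parent Z u, ?_, ?_⟩
    · refine mem_filter.2 ⟨hpar.cutTop_mem Z u, fun u' hu' => ?_⟩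
      refine (mem_filter.1 hK).2 ((ConnectedComponent.mem_supp_iff _ _).2 ?_)
      rw [hmk, hu']
    · exact ConnectedComponent.sound (hpar.reachable_cutTop hrZ u).symm

theorem IsParentMap.goodCut_iff (hpar : G.IsParentMap r parent) (hG : G.IsTree)
    (hrZ : r ∉ Z) {q : ℕ} (T : Fin q → Set V) :
    GoodCut G T parent Z ↔
      ∀ Y, #(G.enclosedTops r parent Z Y) ≤ #(candidatesMeeting T Y) :=
  (exists_injective_componentRep_iff (G.cutGraph parent Z) T).trans <|
    forall_congr' fun Y => by
      rw [← hpar.card_enclosedTops_eq hG hrZ Y]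
      -- the two sides differ only in the `Fintype` instance on the components
      convert Iff.rfl

theorem card_enclosedTops_add_le (Z A B : Finset V) :
    #(G.enclosedTops r parent Z A) + #(G.enclosedTops r parent Z B) ≤
      #(G.enclosedTops r parent Z (A ∪ B)) + #(G.enclosedTops r parent Z (A ∩ B)) := by
  have hunion : G.enclosedTops r parent Z A ∪ G.enclosedTops r parent Z B ⊆
      G.enclosedTops r parent Z (A ∪ B) := by
    intro v
    simp only [enclosedTops, mem_union, mem_filter]
    rintro (⟨hv, h⟩ | ⟨hv, h⟩)
    exacts [⟨hv, fun u hu => Or.inl (h u hu)⟩, ⟨hv, fun u hu => Or.inr (h u hu)⟩]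
  have hinter : G.enclosedTops r parent Z (A ∩ B) =
      G.enclosedTops r parent Z A ∩ G.enclosedTops r parent Z B := by
    ext v
    simp only [enclosedTops, mem_inter, mem_filter]
    exact ⟨fun ⟨hv, h⟩ =>
        ⟨⟨hv, fun u hu => (h u hu).1⟩, ⟨hv, fun u hu => (h u hu).2⟩⟩,
      fun ⟨⟨hv, h₁⟩, ⟨_, h₂⟩⟩ => ⟨hv, fun u hu => ⟨h₁ u hu, h₂ u hu⟩⟩⟩
  rw [hinter, ← card_union_add_card_inter (G.enclosedTops r parent Z A)]
  exact Nat.add_le_add_right (card_le_card hunion) _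

theorem card_candidatesMeeting_union_le {ι : Type*} [Fintype ι] {T : ι → Set V}
    (hall : ∀ Y, #(G.enclosedTops r parent Z Y) ≤ #(candidatesMeeting T Y)) {A B : Finset V}
    (hA : #(candidatesMeeting T A) ≤ #(G.enclosedTops r parent Z A))
    (hB : #(candidatesMeeting T B) ≤ #(G.enclosedTops r parent Z B)) :
    #(candidatesMeeting T (A ∪ B)) ≤ #(G.enclosedTops r parent Z (A ∪ B)) := by
  have := card_candidatesMeeting_union_add_inter_le T A B
  have := card_enclosedTops_add_le (G := G) (r := r) (parent := parent) Z A B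
  have := hall (A ∩ B)
  omega

variable {Y Y' : Finset V}

theorem IsParentMap.enclosedTops_mono (hpar : G.IsParentMap r parent) (hZ : Z ⊆ Z')
    (hY : Y ⊆ Y') : G.enclosedTops r parent Z Y ⊆ G.enclosedTops r parent Z' Y' := by
  intro v hv
  obtain ⟨hvZ, hvY⟩ := mem_filter.1 hv
  refine mem_filter.2 ⟨insert_subset_insert r hZ hvZ, fun u hu => hY (hvY u ?_)⟩
  rw [← hpar.cutTop_cutTop hZ u, hu, cutTop_of_mem hvZ]

theorem IsParentMap.mem_enclosedTops_of_mem_insert (hpar : G.IsParentMap r parent) {z v : V}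
    (hv : v ∈ G.enclosedTops r parent (insert z Z) Y) (hvz : v ≠ z)
    (hv₀ : v = G.cutTop r parent Z z → z ∈ G.enclosedTops r parent (insert z Z) Y) :
    v ∈ G.enclosedTops r parent Z Y := by
  obtain ⟨hvS, hvY⟩ := mem_filter.1 hv
  refine mem_filter.2 ⟨?_, fun u hu => ?_⟩
  · rw [mem_insert, mem_insert] at hvS
    rw [mem_insert]
    tauto
  · rcases hpar.cutTop_insert z Z u with h | h
    · have hvv₀ : v = G.cutTop r parent Z z := by
        rw [← hu, ← hpar.cutTop_cutTop (subset_insert z Z) u, h]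
      exact (mem_filter.1 (hv₀ hvv₀)).2 u h
    · exact hvY u (h.trans hu)

theorem IsParentMap.mem_enclosedTops_insert_of_cutTop_mem (hpar : G.IsParentMap r parent)
    {z : V} (h : G.cutTop r parent Z z ∈ G.enclosedTops r parent Z Y) :
    z ∈ G.enclosedTops r parent (insert z Z) Y := by
  refine mem_filter.2 ⟨mem_insert_of_mem (mem_insert_self z Z), fun u hu =>
    (mem_filter.1 h).2 u ?_⟩
  rw [← hpar.cutTop_cutTop (subset_insert z Z) u, hu]

theorem IsParentMap.card_enclosedTops_insert (hpar : G.IsParentMap r parent) {z : V}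
    (hz : z ∉ insert r Z) (Y : Finset V) :
    #(G.enclosedTops r parent (insert z Z) Y) =
      #(G.enclosedTops r parent Z Y) + if G.SplitsInside r parent Z z Y then 1 else 0 := by
  rw [SplitsInside]
  set E := G.enclosedTops r parent Z Y
  set E' := G.enclosedTops r parent (insert z Z) Y
  set v₀ := G.cutTop r parent Z z
  have hEE' : E ⊆ E' := hpar.enclosedTops_mono (subset_insert z Z) subset_rfl
  have hzE : z ∉ E := fun h => hz (mem_filter.1 h).1
  by_cases hzE' : z ∈ E'
  · have : E' = insert z E := by
      refine Subset.antisymm (fun v hv => ?_) (insert_subset hzE' hEE')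
      by_cases hvz : v = z
      · exact hvz ▸ mem_insert_self z E
      · exact mem_insert_of_mem (hpar.mem_enclosedTops_of_mem_insert hv hvz fun _ => hzE')
    rw [if_pos (Or.inl hzE'), this, card_insert_of_notMem hzE]
  by_cases hv₀E' : v₀ ∈ E'
  · have : E' = insert v₀ E := by
      refine Subset.antisymm (fun v hv => ?_) (insert_subset hv₀E' hEE')
      by_cases hvv₀ : v = v₀
      · exact hvv₀ ▸ mem_insert_self v₀ E
      · exact mem_insert_of_mem (hpar.mem_enclosedTops_of_mem_insert hv
          (fun h => hzE' (h ▸ hv)) fun h => absurd h hvv₀)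
    rw [if_pos (Or.inr hv₀E'), this, card_insert_of_notMem
      fun h => hzE' (hpar.mem_enclosedTops_insert_of_cutTop_mem h)]
  · have : E' = E := by
      refine Subset.antisymm (fun v hv => hpar.mem_enclosedTops_of_mem_insert hv
        (fun h => hzE' (h ▸ hv)) fun h => ?_) hEE'
      subst h
      exact absurd hv hv₀E'
    rw [if_neg (not_or.2 ⟨hzE', hv₀E'⟩), this, add_zero]

theorem IsParentMap.splitsInside_mono (hpar : G.IsParentMap r parent) {Z₁ : Finset V} {z : V}
    (hZ : Z₁ ⊆ Z) (hz : z ∉ insert r Z) (hY : Y ⊆ Y')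
    (h : G.SplitsInside r parent Z₁ z Y) :
    G.SplitsInside r parent Z z Y' := by
  have hsub : insert z Z₁ ⊆ insert z Z := insert_subset_insert z hZ
  refine h.imp (fun h => hpar.enclosedTops_mono hsub hY h) fun h => ?_
  have htop : G.cutTop r parent (insert z Z₁) (G.cutTop r parent Z z) =
      G.cutTop r parent Z₁ z := by
    rcases hpar.cutTop_insert z Z₁ (G.cutTop r parent Z z) with h' | h'
    · -- the old top lies strictly above `z`, so it cannot fall into the part below `z`
      have hle := hpar.dist_cutTop_le (insert z Z₁) (G.cutTop r parent Z z)
      have hlt := hpar.dist_cutTop_lt hz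
      rw [h'] at hle
      omega
    · rw [h', hpar.cutTop_cutTop hZ]
  refine mem_filter.2 ⟨insert_subset_insert r (subset_insert z Z) (hpar.cutTop_mem Z z),
    fun u hu => hY ((mem_filter.1 h).2 u ?_)⟩
  rw [← hpar.cutTop_cutTop hsub u, hu, htop]

theorem IsParentMap.card_enclosedTops_union_le (hpar : G.IsParentMap r parent) {K : Finset V}
    (hrK : r ∉ K) (hZK : Disjoint Z K) (Y : Finset V) :
    #(G.enclosedTops r parent (Z ∪ K) Y) ≤ #(G.enclosedTops r parent Z Y) + #K := by
  induction K using Finset.induction_on with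
  | empty => simp
  | insert a K haK ih =>
    have ha := Finset.notMem_insert_union hrK hZK haK
    have := ih (fun h => hrK (mem_insert_of_mem h)) (disjoint_insert_right.1 hZK).2
    rw [union_insert, hpar.card_enclosedTops_insert ha, card_insert_of_notMem haK]
    split_ifs <;> omega

theorem IsParentMap.card_add_le_card_enclosedTops_union (hpar : G.IsParentMap r parent)
    {K : Finset V} (hrK : r ∉ K) (hZK : Disjoint Z K)
    (hsplit : ∀ z ∈ K, G.SplitsInside r parent Z z Y) :
    #(G.enclosedTops r parent Z Y) + #K ≤ #(G.enclosedTops r parent (Z ∪ K) Y) := by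
  induction K using Finset.induction_on with
  | empty => simp
  | insert a K haK ih =>
    have ha := Finset.notMem_insert_union hrK hZK haK
    have := ih (fun h => hrK (mem_insert_of_mem h)) (disjoint_insert_right.1 hZK).2
      fun z hz => hsplit z (mem_insert_of_mem hz)
    rw [union_insert, hpar.card_enclosedTops_insert ha, card_insert_of_notMem haK,
      if_pos (hpar.splitsInside_mono subset_union_left ha subset_rfl
        (hsplit a (mem_insert_self a K)))]
    omega

end Enclosed

section Exchange

variable {V : Type*} [Fintype V] [DecidableEq V] {G : SimpleGraph V} {r : V} {parent : V → V}
  {q : ℕ} {T : Fin q → Set V}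

theorem IsParentMap.goodCut_of_subset (hpar : G.IsParentMap r parent) (hG : G.IsTree)
    {Z Z' : Finset V} (hZ : Z' ⊆ Z) (hrZ : r ∉ Z) (h : GoodCut G T parent Z) :
    GoodCut G T parent Z' := by
  rw [hpar.goodCut_iff hG hrZ] at h
  rw [hpar.goodCut_iff hG fun h => hrZ (hZ h)]
  exact fun Y => (card_le_card (hpar.enclosedTops_mono hZ subset_rfl)).trans (h Y)

theorem IsParentMap.exists_tight_splitsInside (hpar : G.IsParentMap r parent) (hG : G.IsTree)
    {Z : Finset V} {z : V} (hrZ : r ∉ Z) (hz : z ∉ insert r Z) (hZ : GoodCut G T parent Z)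
    (hzZ : ¬GoodCut G T parent (insert z Z)) :
    ∃ Y, #(candidatesMeeting T Y) ≤ #(G.enclosedTops r parent Z Y) ∧
      G.SplitsInside r parent Z z Y := by
  have hr : r ∉ insert z Z := by
    rw [mem_insert, not_or]
    exact ⟨fun h => ne_of_notMem_insert hz h.symm, hrZ⟩
  rw [hpar.goodCut_iff hG hrZ] at hZ
  rw [hpar.goodCut_iff hG hr] at hzZ
  obtain ⟨Y, hY⟩ := not_forall.1 hzZ
  rw [not_le] at hY
  have hcard := hpar.card_enclosedTops_insert hz Y
  have := hZ Y
  split_ifs at hcard with hs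
  · exact ⟨Y, by omega, hs⟩
  · omega

/-- Rado's argument for transversal matroids, run on the Hall condition of `goodCut_iff`: if no
`z ∈ Z₂ \ Z₁` extends `Z₁`, the union of the Hall violators is a tight set for `Z₁` inside
which every such `z` creates a component, and counting these components against `Z₂`
contradicts `#Z₁ < #Z₂`. -/
theorem IsParentMap.exists_insert_goodCut (hpar : G.IsParentMap r parent) (hG : G.IsTree)
    {Z₁ Z₂ : Finset V} (h₁ : r ∉ Z₁) (h₂ : r ∉ Z₂) (g₁ : GoodCut G T parent Z₁)
    (g₂ : GoodCut G T parent Z₂) (hlt : #Z₁ < #Z₂) :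
    ∃ z ∈ Z₂, z ∉ Z₁ ∧ GoodCut G T parent (insert z Z₁) := by
  by_contra! hcon
  have hD : ∀ z ∈ Z₂ \ Z₁, z ∉ insert r Z₁ := by
    intro z hz
    obtain ⟨hz₂, hz₁⟩ := mem_sdiff.1 hz
    rw [mem_insert, not_or]
    exact ⟨fun h => h₂ (h ▸ hz₂), hz₁⟩
  have hviol : ∀ z ∈ Z₂ \ Z₁, ∃ Y,
      #(candidatesMeeting T Y) ≤ #(G.enclosedTops r parent Z₁ Y) ∧
      G.SplitsInside r parent Z₁ z Y := fun z hz =>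
    hpar.exists_tight_splitsInside hG h₁ (hD z hz) g₁
      (hcon z (mem_sdiff.1 hz).1 (mem_sdiff.1 hz).2)
  choose! Y hYtight hYsplit using hviol
  rw [hpar.goodCut_iff hG h₁] at g₁
  rw [hpar.goodCut_iff hG h₂] at g₂
  have htight : #(candidatesMeeting T ((Z₂ \ Z₁).sup Y)) ≤
      #(G.enclosedTops r parent Z₁ ((Z₂ \ Z₁).sup Y)) := by
    refine sup_induction
      (p := fun A => #(candidatesMeeting T A) ≤ #(G.enclosedTops r parent Z₁ A))
      ?_ (fun A hA B hB => card_candidatesMeeting_union_le g₁ hA hB) hYtight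
    simp [candidatesMeeting]
  have hup := hpar.card_add_le_card_enclosedTops_union (fun h => h₂ (mem_sdiff.1 h).1)
    disjoint_sdiff fun z hz =>
      hpar.splitsInside_mono subset_rfl (hD z hz) (le_sup hz) (hYsplit z hz)
  have hdown := hpar.card_enclosedTops_union_le (Z := Z₂) (fun h => h₁ (mem_sdiff.1 h).1)
    disjoint_sdiff ((Z₂ \ Z₁).sup Y)
  rw [union_sdiff_self_eq_union] at hup hdown
  rw [union_comm] at hdown
  have := g₂ ((Z₂ \ Z₁).sup Y)
  have := card_sdiff_add_card_inter Z₂ Z₁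
  have := card_sdiff_add_card_inter Z₁ Z₂
  rw [inter_comm] at this
  omega

theorem IsParentMap.exists_insert_goodCut_erase (hpar : G.IsParentMap r parent)
    (hG : G.IsTree) {I J : Finset V} (hI : GoodCut G T parent (I.erase r))
    (hJ : GoodCut G T parent (J.erase r)) (hlt : #I < #J) :
    ∃ e ∈ J, e ∉ I ∧ GoodCut G T parent ((insert e I).erase r) := by
  by_cases hr : r ∈ J ∧ r ∉ I
  · exact ⟨r, hr.1, hr.2, by rwa [erase_insert_eq_erase]⟩
  have hlt' : #(I.erase r) < #(J.erase r) := by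
    rw [card_erase_eq_ite, card_erase_eq_ite]
    by_cases hrI : r ∈ I
    · have := card_pos.2 ⟨r, hrI⟩
      split_ifs <;> omega
    · rw [if_neg hrI, if_neg fun hrJ => hr ⟨hrJ, hrI⟩]
      exact hlt
  obtain ⟨z, hzJ, hzI, hz⟩ :=
    hpar.exists_insert_goodCut hG (notMem_erase r I) (notMem_erase r J) hI hJ hlt'
  refine ⟨z, mem_of_mem_erase hzJ, fun h => hzI (mem_erase.2 ⟨ne_of_mem_erase hzJ, h⟩), ?_⟩
  rwa [erase_insert_of_ne (ne_of_mem_erase hzJ)]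

theorem IsParentMap.exists_matroid (hpar : G.IsParentMap r parent) (hG : G.IsTree)
    (T : Fin q → Set V) : ∃ M : Matroid V, ∀ Z : Finset V, r ∉ Z →
      (M.Indep ↑(insert r Z) ↔ GoodCut G T parent Z) := by
  have hgood {I J : Finset V} (hJ : GoodCut G T parent (J.erase r)) (hIJ : I ⊆ J) :
      GoodCut G T parent (I.erase r) :=
    hpar.goodCut_of_subset hG (erase_subset_erase r hIJ) (notMem_erase r J) hJ
  -- `∅` is listed separately because `GoodCut ∅` fails when all candidate sets are empty
  let M := IndepMatroid.ofFinset Set.univ (fun I => I = ∅ ∨ GoodCut G T parent (I.erase r))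
    (Or.inl rfl)
    (fun I J hJ hIJ => hJ.elim (fun h => Or.inl (subset_empty.1 (h ▸ hIJ)))
      fun h => Or.inr (hgood h hIJ))
    (fun I J hI hJ hlt => by
      have hJ' : GoodCut G T parent (J.erase r) :=
        hJ.resolve_left fun h => by simp [h] at hlt
      obtain ⟨e, heJ, heI, he⟩ := hpar.exists_insert_goodCut_erase hG
        (hI.elim (fun h => hgood hJ' (h ▸ empty_subset J)) id) hJ' hlt
      exact ⟨e, heJ, heI, Or.inr he⟩)
    (fun I _ => Set.subset_univ _)
  refine ⟨M.matroid, fun Z hrZ => ?_⟩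
  rw [IndepMatroid.matroid_indep_iff, IndepMatroid.ofFinset_indep, erase_insert hrZ]
  exact or_iff_right (insert_ne_empty r Z)

end Exchange

end SimpleGraph

theorem Finset.sum_le_of_greedy {α : Type*} [DecidableEq α] {P : Finset α → Prop}
    (hsub : ∀ ⦃A B⦄, P B → A ⊆ B → P A)
    (haug : ∀ ⦃A B⦄, P A → P B → #A < #B → ∃ z ∈ B, z ∉ A ∧ P (insert z A))
    (f : α → ℝ) {zs : ℕ → Finset α} (h₀ : zs 0 = ∅) (m : ℕ)
    (hstep : ∀ n < m, ∃ v ∉ zs n, zs (n + 1) = insert v (zs n) ∧ P (zs (n + 1)) ∧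
      ∀ v' ∉ zs n, P (insert v' (zs n)) → f v ≤ f v')
    {B : Finset α} (hB : P B) (hBm : #B = m) : ∑ v ∈ zs m, f v ≤ ∑ v ∈ B, f v := by
  induction m generalizing B with
  | zero => simp [h₀, card_eq_zero.1 hBm]
  | succ m ih =>
    have hcard : ∀ n ≤ m, #(zs n) = n := by
      intro n hn
      induction n with
      | zero => simp [h₀]
      | succ n ihn =>
        obtain ⟨v, hv, hzs, -⟩ := hstep n (by omega)
        rw [hzs, card_insert_of_notMem hv, ihn (by omega)]
    have hPm : P (zs m) := by
      cases m with
      | zero => exact h₀ ▸ hsub hB (empty_subset B)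
      | succ m =>
        obtain ⟨v, -, -, hP, -⟩ := hstep m (by omega)
        exact hP
    obtain ⟨b, hbB, hbmax⟩ := B.exists_max_image f (card_pos.1 (by omega))
    obtain ⟨z, hzB, hzm, hz⟩ := haug hPm hB (by rw [hcard m le_rfl]; omega)
    obtain ⟨v, hv, hzs, -, hmin⟩ := hstep m (by omega)
    have := ih (fun n hn => hstep n (by omega)) (hsub hB (erase_subset b B))
      (by rw [card_erase_of_mem hbB]; omega)
    rw [hzs, sum_insert hv, ← add_sum_erase B f hbB]
    linarith [hmin z hzm hz, hbmax z hzB]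

theorem stmt3_general {V : Type*} [Fintype V] [DecidableEq V]
    (G : SimpleGraph V) (hG : G.IsTree) (r : V)
    (w : Sym2 V → ℝ)
    (q : ℕ) (T : Fin q → Set V) (parent : V → V)
    (hpar : ∀ v, v ≠ r → G.Adj v (parent v) ∧ G.dist (parent v) r + 1 = G.dist v r) :
    (∃ M : Matroid V, ∀ Z : Finset V, r ∉ Z →
        (M.Indep ↑(insert r Z) ↔ GoodCut G T parent Z)) ∧
    (∀ m : ℕ, ∀ zs : ℕ → Finset V, zs 0 = ∅ →
      (∀ n < m, ∃ v, v ∉ zs n ∧ v ≠ r ∧ zs (n + 1) = insert v (zs n) ∧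
        GoodCut G T parent (zs (n + 1)) ∧
        ∀ v', v' ∉ zs n → v' ≠ r → GoodCut G T parent (insert v' (zs n)) →
          w s(v, parent v) ≤ w s(v', parent v')) →
      ∀ Z' : Finset V, r ∉ Z' → GoodCut G T parent Z' → Z'.card = m →
        ∑ v ∈ zs m, w s(v, parent v) ≤ ∑ v ∈ Z', w s(v, parent v)) := by
  refine ⟨SimpleGraph.IsParentMap.exists_matroid hpar hG T,
    fun m zs h₀ hstep Z' hrZ' hgZ' hcard => ?_⟩
  have hr : ∀ n ≤ m, r ∉ zs n := by
    intro n hn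
    induction n with
    | zero => simp [h₀]
    | succ n ih =>
      obtain ⟨v, -, hvr, hzs, -⟩ := hstep n (by omega)
      rw [hzs, mem_insert, not_or]
      exact ⟨Ne.symm hvr, ih (by omega)⟩
  refine sum_le_of_greedy (P := fun Z => r ∉ Z ∧ GoodCut G T parent Z)
    (fun A B hB hAB => ⟨fun h => hB.1 (hAB h),
      SimpleGraph.IsParentMap.goodCut_of_subset hpar hG hAB hB.1 hB.2⟩)
    (fun A B hA hB hlt => ?_) (fun v => w s(v, parent v)) h₀ m (fun n hn => ?_)
    ⟨hrZ', hgZ'⟩ hcard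
  · obtain ⟨z, hzB, hzA, hz⟩ :=
      SimpleGraph.IsParentMap.exists_insert_goodCut hpar hG hA.1 hB.1 hA.2 hB.2 hlt
    refine ⟨z, hzB, hzA, ?_, hz⟩
    rw [mem_insert, not_or]
    exact ⟨fun h => hB.1 (h ▸ hzB), hA.1⟩
  · obtain ⟨v, hv, -, hzs, hgood, hmin⟩ := hstep n hn
    exact ⟨v, hv, hzs, ⟨hr (n + 1) hn, hgood⟩, fun v' hv' hP =>
      hmin v' hv' (fun h => hP.1 (h ▸ mem_insert_self v' (zs n))) hP.2⟩

/-- The sets `Z ∪ {r}` arising from good cuts on a rooted tree are the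
independent sets of a matroid (a gammoid); consequently the greedy algorithm
that repeatedly adds a minimum-weight edge keeping the cut good computes a
minimum-weight good cut of any prescribed size. -/
theorem stmt3 {V : Type*} [Fintype V] [DecidableEq V]
    (G : SimpleGraph V) (hG : G.IsTree) (r : V)
    (w : Sym2 V → ℝ) (hw : ∀ e, 0 ≤ w e)
    (q : ℕ) (T : Fin q → Set V) (parent : V → V)
    (hpar : ∀ v, v ≠ r → G.Adj v (parent v) ∧ G.dist (parent v) r + 1 = G.dist v r) :
    (∃ M : Matroid V, ∀ Z : Finset V, r ∉ Z →
        (M.Indep ↑(insert r Z) ↔ GoodCut G T parent Z)) ∧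
    (∀ m : ℕ, ∀ zs : ℕ → Finset V, zs 0 = ∅ →
      (∀ n < m, ∃ v, v ∉ zs n ∧ v ≠ r ∧ zs (n + 1) = insert v (zs n) ∧
        GoodCut G T parent (zs (n + 1)) ∧
        ∀ v', v' ∉ zs n → v' ≠ r → GoodCut G T parent (insert v' (zs n)) →
          w s(v, parent v) ≤ w s(v', parent v')) →
      ∀ Z' : Finset V, r ∉ Z' → GoodCut G T parent Z' → Z'.card = m →
        ∑ v ∈ zs m, w s(v, parent v) ≤ ∑ v ∈ Z', w s(v, parent v)) :=
  stmt3_general G hG r w q T parent hpar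
end

section
/- Let H be a Gomory–Hu tree of a weighted graph G. For any optimal Single-to-Single solution with representatives t_1*,...,t_q* and components V_1*,...,V_q* ordered so that w(δ(V_q*)) is maximal, there exist q−1 Gomory–Hu tree edges e^1,...,e^{q−1} whose corresponding cuts U(e^i) in G satisfy w(U(e^i)) ≤ w(δ(V_i*)) for each i ∈ [q−1], and such that deleting {e^1,...,e^{q−1}} from H separates all pairs t_i*, t_j* (i ≠ j). -/
open scoped Classical

/-- The set of edges of `G` with exactly one endpoint in `S`. -/
noncomputable def boundary {V : Type*} [Fintype V] [DecidableEq V]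
    (G : SimpleGraph V) (S : Set V) : Finset (Sym2 V) :=
  Finset.univ.filter (fun e => e ∈ G.edgeSet ∧ ∃ u ∈ S, ∃ v ∈ Sᶜ, e = s(u, v))

/-!
Root the Gomory–Hu tree `H` at `t maxI`. For every other `i`, the root path of `t i` leaves the
component `V_i` of `t i` in `G - Cstar` through some tree edge `ab`; since `δ(V_i)` separates `a`
from `b` in `G`, the minimality of the cut `U(ab)` gives `w(U(ab)) ≤ w(δ(V_i))`. Deleting these
edges separates the representatives: if `t i` and `t j` stayed connected, the edge chosen for `i`
would also lie on the root path of `t j`, hence beyond `V_j` and strictly closer to the root than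
the edge chosen for `j`, and symmetrically.
-/

namespace SimpleGraph

variable {V : Type*}

lemma Walk.exists_first_exit {G : SimpleGraph V} {S : Set V} {u v : V} (p : G.Walk u v)
    (hu : u ∈ S) (hv : v ∉ S) :
    ∃ (a b : V) (h : G.Adj a b) (q : G.Walk u a) (q' : G.Walk b v),
      p = q.append (cons h q') ∧ (∀ z ∈ q.support, z ∈ S) ∧ b ∉ S := by
  induction p with
  | nil => exact absurd hu hv
  | @cons u w v h p ih =>
    by_cases hw : w ∈ S
    · obtain ⟨a, b, hab, q, q', rfl, hq, hb⟩ := ih hw hv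
      refine ⟨a, b, hab, cons h q, q', rfl, ?_, hb⟩
      simpa [hu] using hq
    · exact ⟨u, w, h, nil, p, rfl, by simpa using hu, hw⟩

section RootedTree

variable {H : SimpleGraph V}

lemma IsAcyclic.eq_of_isPath (hH : H.IsAcyclic) {u v : V} {p q : H.Walk u v}
    (hp : p.IsPath) (hq : q.IsPath) : p = q :=
  congrArg Subtype.val <| (hH.subsingleton_path u v).elim ⟨p, hp⟩ ⟨q, hq⟩

variable {r : V} {P : ∀ x, H.Walk x r}

lemma IsAcyclic.rootPath_adj (hH : H.IsAcyclic) (hP : ∀ x, (P x).IsPath) {x y : V}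
    (h : H.Adj x y) : P x = .cons h (P y) ∨ P y = .cons h.symm (P x) := by
  by_cases hx : x ∈ (P y).support
  · right
    have hdrop : (P y).dropUntil x hx = P x := hH.eq_of_isPath ((hP y).dropUntil hx) (hP x)
    have htake : (P y).takeUntil x hx = .cons h.symm .nil :=
      hH.eq_of_isPath ((hP y).takeUntil hx) (Path.singleton h.symm).2
    rw [← (P y).take_spec hx, htake, hdrop, Walk.cons_append, Walk.nil_append]
  · left
    exact hH.eq_of_isPath (Walk.cons_isPath_iff _ _ |>.2 ⟨hP y, hx⟩) (hP x) |>.symm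

lemma IsAcyclic.mem_rootPath_edges_iff_of_reachable (hH : H.IsAcyclic)
    (hP : ∀ x, (P x).IsPath) {F : Set (Sym2 V)} {e : Sym2 V} (he : e ∈ F) {u v : V}
    (huv : (H.deleteEdges F).Reachable u v) : e ∈ (P u).edges ↔ e ∈ (P v).edges := by
  obtain ⟨p⟩ := huv
  induction p with
  | nil => rfl
  | @cons x y _ h _ ih =>
    rw [deleteEdges_adj] at h
    have hne : ∀ {a b}, s(a, b) = s(x, y) → e ≠ s(a, b) := fun hab he' =>
      h.2 (hab ▸ he' ▸ he)
    rcases hH.rootPath_adj hP h.1 with hxy | hxy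
    · rw [hxy, Walk.edges_cons, List.mem_cons, or_iff_right (hne rfl), ih]
    · rw [← ih, hxy, Walk.edges_cons, List.mem_cons, or_iff_right (hne Sym2.eq_swap)]

lemma IsAcyclic.length_rootPath_le_of_mem_support (hH : H.IsAcyclic)
    (hP : ∀ x, (P x).IsPath) {x y : V} (hy : y ∈ (P x).support) :
    (P y).length ≤ (P x).length :=
  hH.eq_of_isPath (hP y) ((hP x).dropUntil hy) ▸ (P x).length_dropUntil_le_length hy

lemma IsAcyclic.exists_rootPath_exit (hH : H.IsAcyclic) (hP : ∀ x, (P x).IsPath)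
    {S : Set V} {x : V} (hx : x ∈ S) (hr : r ∉ S) :
    ∃ a b, H.Adj a b ∧ a ∈ S ∧ b ∉ S ∧ s(a, b) ∈ (P x).edges ∧
      (P b).length < (P a).length ∧ ∀ z ∈ (P x).support, z ∈ S ∨ z ∈ (P b).support := by
  obtain ⟨a, b, h, q, q', hPx, hq, hb⟩ := (P x).exists_first_exit hx hr
  have hq' : (Walk.cons h q').IsPath := (hPx ▸ hP x).of_append_right
  have hPa : Walk.cons h q' = P a := hH.eq_of_isPath hq' (hP a)
  have hPb : q' = P b := hH.eq_of_isPath hq'.of_cons (hP b)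
  refine ⟨a, b, h, hq a q.end_mem_support, hb, ?_, ?_, fun z hz => ?_⟩
  · simp [hPx]
  · simp [← hPa, ← hPb]
  · rw [hPx, Walk.mem_support_append_iff, Walk.support_cons, List.mem_cons, hPb] at hz
    rcases hz with hz | hz | hz
    · exact .inl (hq z hz)
    · exact .inl (hz ▸ hq a q.end_mem_support)
    · exact .inr hz

end RootedTree

theorem IsTree.exists_separating_edges {ι : Type*} {H : SimpleGraph V} (hH : H.IsTree)
    (S : ι → Set V) (hS : Pairwise fun i j => Disjoint (S i) (S j)) (t : ι → V)
    (ht : ∀ i, t i ∈ S i) (i₀ : ι) :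
    ∃ a b : ι → V, (∀ i, i ≠ i₀ → H.Adj (a i) (b i) ∧ a i ∈ S i ∧ b i ∉ S i) ∧
      ∀ i j, i ≠ j →
        ¬ (H.deleteEdges ((fun i => s(a i, b i)) '' {i | i ≠ i₀})).Reachable (t i) (t j) := by
  choose P hP using fun x => (hH.existsUnique_path x (t i₀)).exists
  have hexit : ∀ i, i ≠ i₀ → ∃ a b, H.Adj a b ∧ a ∈ S i ∧ b ∉ S i ∧
      s(a, b) ∈ (P (t i)).edges ∧ (P b).length < (P a).length ∧
      ∀ z ∈ (P (t i)).support, z ∈ S i ∨ z ∈ (P b).support := fun i hi =>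
    hH.isAcyclic.exists_rootPath_exit hP (ht i) (Set.disjoint_right.1 (hS hi) (ht i₀))
  have : Nonempty V := ⟨t i₀⟩
  choose! a b hab using hexit
  refine ⟨a, b, fun i hi => ⟨(hab i hi).1, (hab i hi).2.1, (hab i hi).2.2.1⟩, ?_⟩
  have hroot : P (t i₀) = .nil := hH.isAcyclic.eq_of_isPath (hP _) .nil
  have hcloser : ∀ i j, i ≠ j → i ≠ i₀ →
      (H.deleteEdges ((fun i => s(a i, b i)) '' {i | i ≠ i₀})).Reachable (t i) (t j) →
      j ≠ i₀ ∧ (P (a i)).length < (P (a j)).length := by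
    intro i j hij hi hreach
    obtain ⟨-, hai, -, hedge, -, -⟩ := hab i hi
    have hedge' : s(a i, b i) ∈ (P (t j)).edges :=
      (hH.isAcyclic.mem_rootPath_edges_iff_of_reachable hP (Set.mem_image_of_mem _ hi)
        hreach).1 hedge
    have hj : j ≠ i₀ := by
      rintro rfl
      simp [hroot] at hedge'
    obtain ⟨-, -, -, -, hlt, hsupp⟩ := hab j hj
    refine ⟨hj, ?_⟩
    rcases hsupp _ ((P (t j)).fst_mem_support_of_mem_edges hedge') with h | h
    · exact absurd h (Set.disjoint_left.1 (hS hij) hai)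
    · exact (hH.isAcyclic.length_rootPath_le_of_mem_support hP h).trans_lt hlt
  intro i j hij hreach
  by_cases hi : i = i₀
  · subst hi
    exact (hcloser j i hij.symm (Ne.symm hij) hreach.symm).1 rfl
  · obtain ⟨hj, hlt⟩ := hcloser i j hij hi hreach
    exact (hcloser j i hij.symm hj hreach.symm).2.not_gt hlt

section Boundary

variable [Fintype V] [DecidableEq V]

lemma boundary_subset_edgeSet (G : SimpleGraph V) (S : Set V) :
    ↑(boundary G S) ⊆ G.edgeSet :=
  fun _ he => (Finset.mem_filter.1 he).2.1

lemma not_reachable_deleteEdges_boundary {G : SimpleGraph V} {S : Set V} {u v : V}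
    (hu : u ∈ S) (hv : v ∉ S) : ¬ (G.deleteEdges ↑(boundary G S)).Reachable u v := by
  rintro ⟨p⟩
  obtain ⟨d, -, hd, hd'⟩ := p.exists_boundary_dart S hu hv
  have hadj := d.adj
  rw [deleteEdges_adj] at hadj
  exact hadj.2 (Finset.mem_filter.2 ⟨Finset.mem_univ _, hadj.1, _, hd, _, hd', rfl⟩)

end Boundary

end SimpleGraph

theorem stmt4_general {V : Type*} [Fintype V] [DecidableEq V] (G H : SimpleGraph V)
    (w : Sym2 V → ℝ) (hH : H.IsTree)
    (U : Sym2 V → Finset (Sym2 V))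
    (hGHedge : ∀ a b : V, H.Adj a b →
      ↑(U s(a, b)) ⊆ G.edgeSet ∧
      ¬ (G.deleteEdges ↑(U s(a, b))).Reachable a b ∧
      ∀ D : Finset (Sym2 V), ↑D ⊆ G.edgeSet →
        ¬ (G.deleteEdges (↑D : Set (Sym2 V))).Reachable a b →
        ∑ e ∈ U s(a, b), w e ≤ ∑ e ∈ D, w e)
    (q : ℕ) (t : Fin q → V)
    (Cstar : Finset (Sym2 V))
    (hsep : ∀ i j, i ≠ j → ¬ (G.deleteEdges ↑Cstar).Reachable (t i) (t j))
    (maxI : Fin q) :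
    ∃ f : Fin q → Sym2 V,
      (∀ i, i ≠ maxI → f i ∈ H.edgeSet ∧
        ∑ e ∈ U (f i), w e ≤
          ∑ e ∈ boundary G ((G.deleteEdges ↑Cstar).connectedComponentMk (t i)).supp, w e) ∧
      (∀ i j, i ≠ j →
        ¬ (H.deleteEdges ↑((Finset.univ.filter (· ≠ maxI)).image f)).Reachable (t i) (t j)) := by
  set G' := G.deleteEdges ↑Cstar
  have hS : Pairwise fun i j =>
      Disjoint (G'.connectedComponentMk (t i)).supp (G'.connectedComponentMk (t j)).supp :=
    fun i j hij => G'.pairwise_disjoint_supp_connectedComponent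
      fun h => hsep i j hij (SimpleGraph.ConnectedComponent.exact h)
  obtain ⟨a, b, hab, hsepH⟩ := hH.exists_separating_edges _ hS t
    (fun i => (SimpleGraph.ConnectedComponent.mem_supp_iff _ _).2 rfl) maxI
  refine ⟨fun i => s(a i, b i), fun i hi => ?_, ?_⟩
  · obtain ⟨hadj, ha, hb⟩ := hab i hi
    exact ⟨hadj, (hGHedge _ _ hadj).2.2 _ (SimpleGraph.boundary_subset_edgeSet G _)
      (SimpleGraph.not_reachable_deleteEdges_boundary ha hb)⟩
  · simpa only [Finset.coe_image, Finset.coe_filter, Finset.mem_univ, true_and] using hsepH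

/-- Given a Gomory–Hu tree `H` of `G` (each tree edge `s(a,b)` carries a minimum
`a`–`b` cut `U s(a,b)` of `G`, and min cuts in `G` are witnessed on tree paths)
and an optimal Single-to-Single solution with representatives `t i` lying in
pairwise distinct components of `G - Cstar`, where the component of `t maxI` has
maximum boundary weight, there are `q - 1` tree edges (one for each `i ≠ maxI`)
whose corresponding cuts satisfy `w(U(e^i)) ≤ w(δ(V_i*))` and whose deletion
from `H` separates all pairs of representatives. -/
theorem stmt4 {V : Type*} [Fintype V] [DecidableEq V] (G H : SimpleGraph V)
    (w : Sym2 V → ℝ) (hw : ∀ e, 0 ≤ w e) (hH : H.IsTree)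
    (U : Sym2 V → Finset (Sym2 V))
    (hGHedge : ∀ a b : V, H.Adj a b →
      ↑(U s(a, b)) ⊆ G.edgeSet ∧
      ¬ (G.deleteEdges ↑(U s(a, b))).Reachable a b ∧
      ∀ D : Finset (Sym2 V), ↑D ⊆ G.edgeSet →
        ¬ (G.deleteEdges (↑D : Set (Sym2 V))).Reachable a b →
        ∑ e ∈ U s(a, b), w e ≤ ∑ e ∈ D, w e)
    (hGHpath : ∀ u v : V, ∀ p : H.Walk u v, p.IsPath →
      ∀ D : Finset (Sym2 V), ↑D ⊆ G.edgeSet →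
        ¬ (G.deleteEdges (↑D : Set (Sym2 V))).Reachable u v →
        ∃ e ∈ p.edges, ∑ e' ∈ U e, w e' ≤ ∑ e' ∈ D, w e')
    (q : ℕ) (hq : 1 ≤ q) (t : Fin q → V)
    (Cstar : Finset (Sym2 V)) (hC : ↑Cstar ⊆ G.edgeSet)
    (hsep : ∀ i j, i ≠ j → ¬ (G.deleteEdges ↑Cstar).Reachable (t i) (t j))
    (maxI : Fin q)
    (hmax : ∀ i,
      ∑ e ∈ boundary G ((G.deleteEdges ↑Cstar).connectedComponentMk (t i)).supp, w e ≤
      ∑ e ∈ boundary G ((G.deleteEdges ↑Cstar).connectedComponentMk (t maxI)).supp, w e) :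
    ∃ f : Fin q → Sym2 V,
      (∀ i, i ≠ maxI → f i ∈ H.edgeSet ∧
        ∑ e ∈ U (f i), w e ≤
          ∑ e ∈ boundary G ((G.deleteEdges ↑Cstar).connectedComponentMk (t i)).supp, w e) ∧
      (∀ i j, i ≠ j →
        ¬ (H.deleteEdges ↑((Finset.univ.filter (· ≠ maxI)).image f)).Reachable (t i) (t j)) :=
  stmt4_general G H w hH U hGHedge q t Cstar hsep maxI
end

section
/- If a set T of q+1 ≥ 2 vertices is partitioned into components V_1*,...,V_q* (one representative per component) by an edge set C, and V_q* is a part whose boundary δ(V_q*) has maximum weight among all parts, then Σ_{i=1}^{q−1} w(δ(V_i*)) ≤ (1 − 1/q)·Σ_{i=1}^{q} w(δ(V_i*)) ≤ (2 − 2/q)·w(C). -/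
open scoped Classical

/-- If representatives `t i` lie in pairwise distinct components of `G - C` and
the component of `t maxI` has maximum boundary weight, then the total boundary
weight of the other components is at most `(1 - 1/q)` times the total boundary
weight of all `q` components, which in turn is at most `(2 - 2/q) · w(C)`. -/
theorem stmt6 {V : Type*} [Fintype V] [DecidableEq V] (G : SimpleGraph V)
    (w : Sym2 V → ℝ) (hw : ∀ e, 0 ≤ w e)
    (C : Finset (Sym2 V)) (hC : ↑C ⊆ G.edgeSet)
    (q : ℕ) (hq : 1 ≤ q) (t : Fin q → V)
    (hdist : ∀ i j, i ≠ j → ¬ (G.deleteEdges ↑C).Reachable (t i) (t j))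
    (maxI : Fin q)
    (hmax : ∀ i,
      ∑ e ∈ boundary G ((G.deleteEdges ↑C).connectedComponentMk (t i)).supp, w e ≤
      ∑ e ∈ boundary G ((G.deleteEdges ↑C).connectedComponentMk (t maxI)).supp, w e) :
    (∑ i ∈ Finset.univ.filter (· ≠ maxI),
        ∑ e ∈ boundary G ((G.deleteEdges ↑C).connectedComponentMk (t i)).supp, w e
      ≤ (1 - 1 / (q : ℝ)) * ∑ i : Fin q,
        ∑ e ∈ boundary G ((G.deleteEdges ↑C).connectedComponentMk (t i)).supp, w e) ∧
    ((1 - 1 / (q : ℝ)) * ∑ i : Fin q,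
        ∑ e ∈ boundary G ((G.deleteEdges ↑C).connectedComponentMk (t i)).supp, w e
      ≤ (2 - 2 / (q : ℝ)) * ∑ e ∈ C, w e) := by
  classical
  set H := G.deleteEdges (↑C : Set (Sym2 V)) with hH
  set S : Fin q → Set V := fun i => (H.connectedComponentMk (t i)).supp with hSdef
  set f : Fin q → ℝ := fun i => ∑ e ∈ boundary G (S i), w e with hfdef
  have hq' : (0 : ℝ) < q := by exact_mod_cast hq
  -- disjointness of supports
  have hdisj : ∀ i j : Fin q, ∀ x : V, x ∈ S i → x ∈ S j → i = j := by
    intro i j x hi hj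
    by_contra hij
    have hi' := (SimpleGraph.ConnectedComponent.mem_supp_iff _ _).1 hi
    have hj' := (SimpleGraph.ConnectedComponent.mem_supp_iff _ _).1 hj
    exact hdist i j hij (SimpleGraph.ConnectedComponent.exact (hi'.symm.trans hj'))
  -- boundaries are contained in C
  have hsub : ∀ i, boundary G (S i) ⊆ C := by
    intro i e he
    simp only [boundary, Finset.mem_filter, Finset.mem_univ, true_and] at he
    obtain ⟨heE, u, hu, v, hv, rfl⟩ := he
    by_contra hec
    have hadj : H.Adj u v := by
      rw [hH, SimpleGraph.deleteEdges_adj]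
      exact ⟨(SimpleGraph.mem_edgeSet G).1 heE, by simpa using hec⟩
    have : v ∈ S i := by
      have hu' := (SimpleGraph.ConnectedComponent.mem_supp_iff _ _).1 hu
      rw [hSdef]
      rw [SimpleGraph.ConnectedComponent.mem_supp_iff]
      rw [← hu']
      exact SimpleGraph.ConnectedComponent.sound hadj.reachable.symm
    exact hv this
  -- each edge of C lies in at most 2 boundaries
  have key : ∀ e ∈ C,
      ((Finset.univ.filter (fun i : Fin q => e ∈ boundary G (S i))).card : ℝ) ≤ 2 := by
    intro e heC
    induction e using Sym2.ind with
    | _ a b =>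
      have hcard : (Finset.univ.filter
          (fun i : Fin q => s(a,b) ∈ boundary G (S i))).card ≤ ({a, b} : Finset V).card := by
        apply Finset.card_le_card_of_injOn (fun i => if a ∈ S i then a else b)
        · intro i hi
          by_cases h : a ∈ S i <;> simp [h]
        · intro i hi j hj hgij
          simp only [Finset.mem_coe, Finset.mem_filter, Finset.mem_univ, true_and] at hi hj
          have hmem : ∀ k : Fin q, s(a,b) ∈ boundary G (S k) →
              (if a ∈ S k then a else b) ∈ S k := by
            intro k hk
            simp only [boundary, Finset.mem_filter, Finset.mem_univ, true_and] at hk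
            obtain ⟨-, u, hu, v, hv, heq⟩ := hk
            rcases Sym2.eq_iff.1 heq with ⟨rfl, rfl⟩ | ⟨rfl, rfl⟩
            · simp [hu]
            · by_cases h : a ∈ S k <;> simp [h, hu]
          have h1 := hmem i hi
          have h2 := hmem j hj
          dsimp only at hgij
          rw [hgij] at h1
          exact hdisj i j _ h1 h2
      calc ((Finset.univ.filter (fun i : Fin q => s(a,b) ∈ boundary G (S i))).card : ℝ)
          ≤ (({a, b} : Finset V).card : ℝ) := by exact_mod_cast hcard
        _ ≤ 2 := by
            have := Finset.card_insert_le a ({b} : Finset V)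
            simp only [Finset.card_singleton] at this
            exact_mod_cast this
  -- total boundary weight is at most 2 * w(C)
  have hF2 : ∑ i : Fin q, f i ≤ 2 * ∑ e ∈ C, w e := by
    have step1 : ∀ i : Fin q, f i = ∑ e ∈ C, (if e ∈ boundary G (S i) then w e else 0) := by
      intro i
      rw [Finset.sum_ite_mem, Finset.inter_eq_right.2 (hsub i)]
    calc ∑ i : Fin q, f i
        = ∑ i : Fin q, ∑ e ∈ C, (if e ∈ boundary G (S i) then w e else 0) := by
          exact Finset.sum_congr rfl fun i _ => step1 i
      _ = ∑ e ∈ C, ∑ i : Fin q, (if e ∈ boundary G (S i) then w e else 0) :=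
          Finset.sum_comm
      _ ≤ ∑ e ∈ C, 2 * w e := by
          apply Finset.sum_le_sum
          intro e heC
          rw [← Finset.sum_filter, Finset.sum_const, nsmul_eq_mul]
          exact mul_le_mul_of_nonneg_right (key e heC) (hw e)
      _ = 2 * ∑ e ∈ C, w e := by rw [Finset.mul_sum]
  have hFM : ∑ i : Fin q, f i ≤ q * f maxI := by
    calc ∑ i : Fin q, f i ≤ ∑ _i : Fin q, f maxI := Finset.sum_le_sum fun i _ => hmax i
      _ = q * f maxI := by simp [Finset.sum_const, mul_comm]
  have hgoal1 : ∑ i ∈ Finset.univ.filter (· ≠ maxI), f i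
      ≤ (1 - 1 / (q : ℝ)) * ∑ i : Fin q, f i := by
    have herase : ∑ i ∈ Finset.univ.filter (· ≠ maxI), f i
        = ∑ i : Fin q, f i - f maxI := by
      rw [Finset.filter_ne' Finset.univ maxI, Finset.sum_erase_eq_sub (Finset.mem_univ maxI)]
    rw [herase]
    have hdivM : (∑ i : Fin q, f i) / q ≤ f maxI := by
      rw [div_le_iff₀ hq']
      linarith [hFM]
    have : (1 - 1 / (q : ℝ)) * ∑ i : Fin q, f i
        = ∑ i : Fin q, f i - (∑ i : Fin q, f i) / q := by ring
    rw [this]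
    linarith
  have hnn : 0 ≤ 1 - 1 / (q : ℝ) := by
    have : 1 / (q : ℝ) ≤ 1 := by
      rw [div_le_one hq']
      exact_mod_cast hq
    linarith
  refine ⟨hgoal1, ?_⟩
  calc (1 - 1 / (q : ℝ)) * ∑ i : Fin q, f i
      ≤ (1 - 1 / (q : ℝ)) * (2 * ∑ e ∈ C, w e) := mul_le_mul_of_nonneg_left hF2 hnn
    _ = (2 - 2 / (q : ℝ)) * ∑ e ∈ C, w e := by ring
end

section
/- For any instance (s, T_1, ..., T_q) of Fixed-to-Single on graph G, the Some-to-Single instance on G with candidate sets T_i' = T_i ∪ {s} for i ∈ [q] and T_{q+1}' = {s} has the same optimal value. -/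
open scoped Classical

/-- The candidate sets of the Some-to-Single instance built from a
Fixed-to-Single instance `(s, T)`: `T i ∪ {s}` for each `i`, plus `{s}`. -/
def StSSets {V : Type*} (s : V) {q : ℕ} (T : Fin q → Set V) :
    Option (Fin q) → Set V :=
  fun o => o.elim {s} (fun i => T i ∪ {s})

/-- The Fixed-to-Single instance `(s, T_1, …, T_q)` and the Some-to-Single
instance with candidate sets `T_i' = T_i ∪ {s}` (`i ∈ [q]`) and `T_{q+1}' = {s}`
have the same optimal value. -/
theorem stmt10 {V : Type*} [Fintype V] [DecidableEq V] (G : SimpleGraph V)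
    (w : Sym2 V → ℝ) (hw : ∀ e, 0 ≤ w e) (s : V) (q : ℕ) (T : Fin q → Set V) :
    sInf {x : ℝ | ∃ C : Finset (Sym2 V), ↑C ⊆ G.edgeSet ∧
        (∀ i, ∃ t ∈ T i, ¬ (G.deleteEdges ↑C).Reachable s t) ∧
        ∑ e ∈ C, w e = x}
    = sInf {x : ℝ | ∃ C : Finset (Sym2 V), ↑C ⊆ G.edgeSet ∧
        (∃ t : Option (Fin q) → V, (∀ j, t j ∈ StSSets s T j) ∧
          ∀ i j : Option (Fin q), i ≠ j →
            ∃ u ∈ StSSets s T i, ¬ (G.deleteEdges ↑C).Reachable u (t j)) ∧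
        ∑ e ∈ C, w e = x} := by
  congr 1
  ext x
  simp only [Set.mem_setOf_eq]
  constructor
  · rintro ⟨C, hC, ht, hsum⟩
    refine ⟨C, hC, ?_, hsum⟩
    choose f hf hnr using ht
    refine ⟨fun o => o.elim s f, ?_, ?_⟩
    · rintro (_|j) <;> simp [StSSets, hf]
    · rintro i j hij
      match j with
      | none =>
        obtain ⟨k, rfl⟩ : ∃ k, i = some k := by
          cases i
          · exact absurd rfl hij
          · exact ⟨_, rfl⟩
        exact ⟨f k, by simp [StSSets, hf], fun h => hnr k h.symm⟩
      | some k =>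
        exact ⟨s, by cases i <;> simp [StSSets], hnr k⟩
  · rintro ⟨C, hC, ⟨t, htm, hpair⟩, hsum⟩
    refine ⟨C, hC, fun i => ?_, hsum⟩
    have htn : t none = s := htm none
    obtain ⟨u, hu, hnr⟩ := hpair (some i) none (by simp)
    rw [htn] at hnr
    have hus : u ≠ s := fun h => hnr (h ▸ SimpleGraph.Reachable.refl _)
    have hmem : u ∈ T i := by
      rcases hu with hu | hu
      · exact hu
      · exact absurd hu hus
    exact ⟨u, hmem, fun h => hnr h.symm⟩
end

section
/- For any instance (s, T_1,...,T_q) of Fixed-to-Single on G = (V,E) with q ≥ 2, the Some-to-All instance on G' = (V ∪ {s_1,...,s_q}, E) (the s_i being isolated new vertices) with candidate sets T_i' = T_i ∪ {s_i} for i ∈ [q] and T_{q+1}' = {s, s_1,...,s_q} has the same optimal value. -/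
open scoped Classical

/-!
Both problems range over the same cuts: `G'` has no edges at the new vertices, so its edge
subsets are exactly the images of edge subsets `C` of `G`, with equal weight, and
`G' − C` is `G − C` with the isolated vertices `s_1, …, s_q` added. In `G' − C` the vertex
`s_i` reaches nothing else, so it separates `T_i'` from every `T_j'` with `j ≠ i` in `[q]`,
and (as `q ≥ 2`) some `s_k` separates `T_{q+1}'` from `T_j'`. The only real constraint is
therefore to separate `T_i'` from `T_{q+1}'`; since `s_i ∈ T_{q+1}'`, this requires some
`t ∈ T_i` not reachable from `s` in `G − C`, which is exactly the Fixed-to-Single condition.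
-/

/-- The candidate sets of the Some-to-All instance built from a Fixed-to-Single
instance `(s, T)`: on `G' = (V ⊕ Fin q)`, set `T_i' = T_i ∪ {s_i}` for `i ∈ [q]`
(with `s_i = Sum.inr i` the new isolated vertices) and
`T_{q+1}' = {s, s_1, …, s_q}`. -/
def StASets {V : Type*} (s : V) {q : ℕ} (T : Fin q → Set V) :
    Option (Fin q) → Set (V ⊕ Fin q) :=
  fun o => o.elim ({Sum.inl s} ∪ Set.range Sum.inr)
    (fun i => Sum.inl '' T i ∪ {Sum.inr i})

namespace SimpleGraph

variable {V W : Type*}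

theorem IsIsolated.reachable_iff {G : SimpleGraph V} {v w : V} (hv : G.IsIsolated v) :
    G.Reachable v w ↔ v = w := by
  refine ⟨fun ⟨p⟩ => ?_, fun h => h ▸ Reachable.refl v⟩
  cases p with
  | nil => rfl
  | cons h _ => exact absurd h (hv _)

theorem isIsolated_map_of_notMem_range (f : V ↪ W) (G : SimpleGraph V) {x : W}
    (hx : x ∉ Set.range f) : (G.map f).IsIsolated x := by
  intro y hxy
  obtain ⟨u, v, -, rfl, -⟩ := (map_adj f G _ y).mp hxy
  exact hx ⟨u, rfl⟩

theorem reachable_map_apply_iff (f : V ↪ W) (G : SimpleGraph V) {u v : V} :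
    (G.map f).Reachable (f u) (f v) ↔ G.Reachable u v := by
  refine ⟨fun h => ?_, fun h => h.map (Embedding.map f G).toHom⟩
  have : Nonempty V := ⟨u⟩
  have hinv := Function.leftInverse_invFun f.injective
  -- every edge of `G.map f` comes from `G`, so `invFun f` is a homomorphism back to `G`
  let g : G.map f →g G :=
    ⟨Function.invFun f, fun {_ _} hab => by
      obtain ⟨u', v', huv, rfl, rfl⟩ := (map_adj f G _ _).mp hab
      rwa [hinv u', hinv v']⟩
  simpa only [g, RelHom.coeFn_mk, hinv u, hinv v] using h.map g

theorem map_deleteEdges (f : V ↪ W) (G : SimpleGraph V) (s : Set (Sym2 V)) :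
    (G.deleteEdges s).map f = (G.map f).deleteEdges (f.sym2Map '' s) := by
  rw [← edgeSet_inj, edgeSet_map, edgeSet_deleteEdges, edgeSet_deleteEdges, edgeSet_map,
    Set.image_sdiff f.sym2Map.injective]

theorem exists_finset_subset_edgeSet_map_iff [DecidableEq W] (f : V ↪ W) (G : SimpleGraph V)
    (P : Finset (Sym2 W) → Prop) :
    (∃ C' : Finset (Sym2 W), ↑C' ⊆ (G.map f).edgeSet ∧ P C') ↔
      ∃ C : Finset (Sym2 V), ↑C ⊆ G.edgeSet ∧ P (C.image f.sym2Map) := by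
  rw [edgeSet_map]
  constructor
  · rintro ⟨C', hC', hP⟩
    obtain ⟨C, hC, rfl⟩ := Finset.subset_set_image_iff.mp hC'
    exact ⟨C, hC, hP⟩
  · rintro ⟨C, hC, hP⟩
    exact ⟨_, by simpa only [Finset.coe_image] using Set.image_mono hC, hP⟩

end SimpleGraph

open SimpleGraph

theorem stASets_separated_iff {V : Type*} {q : ℕ} (hq : 2 ≤ q) (H : SimpleGraph V) (s : V)
    (T : Fin q → Set V) :
    (∀ i j : Option (Fin q), i ≠ j → ∃ u ∈ StASets s T i, ∀ v ∈ StASets s T j,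
        ¬ (H.map (Function.Embedding.inl : V ↪ V ⊕ Fin q)).Reachable u v) ↔
      ∀ i, ∃ t ∈ T i, ¬ H.Reachable s t := by
  have hinl (a b : V) : (H.map (Function.Embedding.inl : V ↪ V ⊕ Fin q)).Reachable
      (Sum.inl a) (Sum.inl b) ↔ H.Reachable a b :=
    reachable_map_apply_iff _ H
  have hinr (k : Fin q) (y : V ⊕ Fin q) :
      (H.map (Function.Embedding.inl : V ↪ V ⊕ Fin q)).Reachable (Sum.inr k) y ↔ Sum.inr k = y :=
    (isIsolated_map_of_notMem_range _ H (by simp)).reachable_iff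
  constructor
  · intro hsep i
    obtain ⟨u, hu, hnot⟩ := hsep (some i) none (by simp)
    cases u with
    | inl t =>
      refine ⟨t, by simpa [StASets] using hu, fun h => ?_⟩
      exact hnot (Sum.inl s) (by simp [StASets]) ((hinl t s).mpr h.symm)
    | inr k => exact absurd (Reachable.refl _) (hnot (Sum.inr k) (by simp [StASets]))
  · intro hcut i j hij
    cases j with
    | none =>
      cases i with
      | none => exact absurd rfl hij
      | some a =>
        obtain ⟨t, ht, hst⟩ := hcut a
        refine ⟨Sum.inl t, by simpa [StASets] using ht, fun v hv h => ?_⟩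
        cases v with
        | inl v =>
          obtain rfl : v = s := by simpa [StASets] using hv
          exact hst ((hinl t v).mp h).symm
        | inr k => exact Sum.inr_ne_inl ((hinr k _).mp h.symm)
    | some b =>
      obtain ⟨a, hab, ha⟩ : ∃ a ≠ b, Sum.inr a ∈ StASets s T i := by
        cases i with
        | none =>
          have : Nontrivial (Fin q) := Fin.nontrivial_iff_two_le.mpr hq
          obtain ⟨a, hab⟩ := exists_ne b
          exact ⟨a, hab, by simp [StASets]⟩
        | some a => exact ⟨a, fun h => hij (h ▸ rfl), by simp [StASets]⟩
      refine ⟨Sum.inr a, ha, fun v hv h => ?_⟩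
      obtain rfl := (hinr a v).mp h
      exact hab (by simpa [StASets] using hv)

theorem stmt11_general {V : Type*} (G : SimpleGraph V)
    (q : ℕ) (hq : 2 ≤ q)
    (w : Sym2 V → ℝ)
    (w' : Sym2 (V ⊕ Fin q) → ℝ)
    (hw' : ∀ u v : V, w' s(Sum.inl u, Sum.inl v) = w s(u, v))
    (s : V) (T : Fin q → Set V) :
    sInf {x : ℝ | ∃ C : Finset (Sym2 V), ↑C ⊆ G.edgeSet ∧
        (∀ i, ∃ t ∈ T i, ¬ (G.deleteEdges ↑C).Reachable s t) ∧
        ∑ e ∈ C, w e = x}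
    = sInf {x : ℝ | ∃ C : Finset (Sym2 (V ⊕ Fin q)),
        ↑C ⊆ (G.map (⟨Sum.inl, Sum.inl_injective⟩ : V ↪ V ⊕ Fin q)).edgeSet ∧
        (∀ i j : Option (Fin q), i ≠ j → ∃ u ∈ StASets s T i, ∀ v ∈ StASets s T j,
          ¬ ((G.map (⟨Sum.inl, Sum.inl_injective⟩ : V ↪ V ⊕ Fin q)).deleteEdges ↑C).Reachable u v) ∧
        ∑ e ∈ C, w' e = x} := by
  set f : V ↪ V ⊕ Fin q := ⟨Sum.inl, Sum.inl_injective⟩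
  congr 1
  ext x
  rw [Set.mem_ofPred_eq, Set.mem_ofPred_eq, exists_finset_subset_edgeSet_map_iff]
  refine exists_congr fun C => and_congr_right fun _ => and_congr ?_ ?_
  · rw [Finset.coe_image, ← map_deleteEdges]
    exact (stASets_separated_iff hq _ s T).symm
  · rw [Finset.sum_image fun _ _ _ _ h => f.sym2Map.injective h]
    refine Eq.congr_left (Finset.sum_congr rfl fun e _ => ?_)
    induction e using Sym2.ind with
    | _ u v => exact (hw' u v).symm

/-- For `q ≥ 2`, the Fixed-to-Single instance `(s, T_1, …, T_q)` on `G` and the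
Some-to-All instance on `G'` (which is `G` together with isolated new vertices
`s_1, …, s_q`) with candidate sets `T_i' = T_i ∪ {s_i}` and
`T_{q+1}' = {s, s_1, …, s_q}` have the same optimal value. -/
theorem stmt11 {V : Type*} [Fintype V] [DecidableEq V] (G : SimpleGraph V)
    (q : ℕ) (hq : 2 ≤ q)
    (w : Sym2 V → ℝ) (hw : ∀ e, 0 ≤ w e)
    (w' : Sym2 (V ⊕ Fin q) → ℝ)
    (hw' : ∀ u v : V, w' s(Sum.inl u, Sum.inl v) = w s(u, v))
    (s : V) (T : Fin q → Set V) :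
    sInf {x : ℝ | ∃ C : Finset (Sym2 V), ↑C ⊆ G.edgeSet ∧
        (∀ i, ∃ t ∈ T i, ¬ (G.deleteEdges ↑C).Reachable s t) ∧
        ∑ e ∈ C, w e = x}
    = sInf {x : ℝ | ∃ C : Finset (Sym2 (V ⊕ Fin q)),
        ↑C ⊆ (G.map (⟨Sum.inl, Sum.inl_injective⟩ : V ↪ V ⊕ Fin q)).edgeSet ∧
        (∀ i j : Option (Fin q), i ≠ j → ∃ u ∈ StASets s T i, ∀ v ∈ StASets s T j,
          ¬ ((G.map (⟨Sum.inl, Sum.inl_injective⟩ : V ↪ V ⊕ Fin q)).deleteEdges ↑C).Reachable u v) ∧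
        ∑ e ∈ C, w' e = x} :=
  stmt11_general G q hq w w' hw' s T
end

section
/- In the simplex rounding setting, for an axis-aligned edge of type (i, k+1), the probability that a threshold scheme which processes terminals 1,...,k (in a random order, with thresholds) and assigns all remaining vertices to terminal k+1 separates the edge's endpoints is at most the corresponding probability for an edge of type (i, j) with j ≤ k at the same location, since terminal k+1 has no threshold. -/
open scoped Classical
open MeasureTheory

/-- The threshold scheme with thresholds `θ` and processing order `σ` on the
first `k` terminals: a point `x ∈ Δ_{k+1}` is assigned to the first terminal
`σ m` (in order) with `x_{σ m} ≥ θ_{σ m}`, and to terminal `k+1` (which has no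
threshold and is processed last) if no such terminal exists. -/
noncomputable def thresholdAssign (k : ℕ) (θ : Fin k → ℝ) (σ : Equiv.Perm (Fin k))
    (x : Fin (k + 1) → ℝ) : Fin (k + 1) :=
  if h : (Finset.univ.filter
      (fun m : Fin k => θ (σ m) ≤ x (Fin.castSucc (σ m)))).Nonempty then
    Fin.castSucc (σ ((Finset.univ.filter
      (fun m : Fin k => θ (σ m) ≤ x (Fin.castSucc (σ m)))).min' h))
  else Fin.last k

lemma aux_key (k : ℕ) (i j : Fin k) (hij : i ≠ j)
    (u : Fin (k + 1) → ℝ) (ε : ℝ) (hε : 0 ≤ ε)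
    (σ : Equiv.Perm (Fin k)) (θ : Fin k → ℝ)
    (h : thresholdAssign k θ σ u ≠ thresholdAssign k θ σ
        (Function.update (Function.update u (Fin.castSucc i) (u (Fin.castSucc i) + ε))
          (Fin.last k) (u (Fin.last k) - ε))) :
    thresholdAssign k θ σ u ≠ thresholdAssign k θ σ
        (Function.update (Function.update u (Fin.castSucc i) (u (Fin.castSucc i) + ε))
          (Fin.castSucc j) (u (Fin.castSucc j) - ε)) := by
  set v1 := Function.update (Function.update u (Fin.castSucc i) (u (Fin.castSucc i) + ε))
      (Fin.last k) (u (Fin.last k) - ε) with hv1def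
  set v2 := Function.update (Function.update u (Fin.castSucc i) (u (Fin.castSucc i) + ε))
      (Fin.castSucc j) (u (Fin.castSucc j) - ε) with hv2def
  have hcs : Function.Injective (Fin.castSucc (n := k)) := Fin.castSucc_injective k
  have hv1 : ∀ m : Fin k, v1 (Fin.castSucc m) =
      if m = i then u (Fin.castSucc i) + ε else u (Fin.castSucc m) := by
    intro m
    rw [hv1def, Function.update_apply, Function.update_apply]
    have : (Fin.castSucc m = Fin.last k) = False := by
      simp [Fin.ext_iff]; omega
    simp only [this, if_false]
    by_cases hmi : m = i
    · simp [hmi]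
    · simp [hmi, fun h' => hmi (hcs h')]
  have hv2 : ∀ m : Fin k, v2 (Fin.castSucc m) =
      if m = j then u (Fin.castSucc j) - ε else
        if m = i then u (Fin.castSucc i) + ε else u (Fin.castSucc m) := by
    intro m
    rw [hv2def, Function.update_apply, Function.update_apply]
    by_cases hmj : m = j
    · simp [hmj]
    · have : ¬ (Fin.castSucc m = Fin.castSucc j) := fun h' => hmj (hcs h')
      simp only [this, if_false, hmj, if_false]
      by_cases hmi : m = i
      · simp [hmi]
      · simp [hmi, fun h' => hmi (hcs h')]
  set Au := Finset.univ.filter (fun m : Fin k => θ (σ m) ≤ u (Fin.castSucc (σ m))) with hAu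
  set A1 := Finset.univ.filter (fun m : Fin k => θ (σ m) ≤ v1 (Fin.castSucc (σ m))) with hA1
  set A2 := Finset.univ.filter (fun m : Fin k => θ (σ m) ≤ v2 (Fin.castSucc (σ m))) with hA2
  set m₀ := σ.symm i with hm₀
  have hσm₀ : σ m₀ = i := σ.apply_symm_apply i
  have hσne : ∀ m : Fin k, m ≠ m₀ → σ m ≠ i := by
    intro m hm hc
    exact hm (σ.injective (by rw [hc, hσm₀]))
  by_cases hle : θ i ≤ u (Fin.castSucc i)
  · -- A1 = Au, assignments equal, contradiction
    exfalso
    apply h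
    have : A1 = Au := by
      ext m
      simp only [hA1, hAu, Finset.mem_filter, Finset.mem_univ, true_and]
      rw [hv1 (σ m)]
      by_cases hmi : σ m = i
      · simp [hmi, hle, le_add_of_le_of_nonneg hle hε]
      · simp [hmi]
    rw [thresholdAssign, thresholdAssign]
    simp only [← hAu, ← hA1, this]
  · by_cases hle2 : θ i ≤ u (Fin.castSucc i) + ε
    swap
    · -- A1 = Au again
      exfalso
      apply h
      have : A1 = Au := by
        ext m
        simp only [hA1, hAu, Finset.mem_filter, Finset.mem_univ, true_and]
        rw [hv1 (σ m)]
        by_cases hmi : σ m = i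
        · simp [hmi, hle, hle2, fun h' : θ (σ m) ≤ u (Fin.castSucc i) => hle (hmi ▸ h')]
        · simp [hmi]
      rw [thresholdAssign, thresholdAssign]
      simp only [← hAu, ← hA1, this]
    -- main case: u_i < θ i ≤ u_i + ε
    have hm0u : m₀ ∉ Au := by
      simp only [hAu, Finset.mem_filter, Finset.mem_univ, true_and, hσm₀]
      exact hle
    have hA1eq : A1 = insert m₀ Au := by
      ext m
      simp only [hA1, hAu, Finset.mem_filter, Finset.mem_univ, true_and, Finset.mem_insert]
      rw [hv1 (σ m)]
      by_cases hm : m = m₀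
      · simp [hm, hσm₀, hle2]
      · simp [hm, hσne m hm]
    have hm0A2 : m₀ ∈ A2 := by
      simp only [hA2, Finset.mem_filter, Finset.mem_univ, true_and, hσm₀]
      rw [hv2 i]
      simp [hij, hle2]
    have hA2sub : ∀ m ∈ A2, m = m₀ ∨ m ∈ Au := by
      intro m hm
      by_cases hmm : m = m₀
      · exact Or.inl hmm
      · right
        simp only [hA2, Finset.mem_filter, Finset.mem_univ, true_and] at hm
        simp only [hAu, Finset.mem_filter, Finset.mem_univ, true_and]
        rw [hv2 (σ m)] at hm
        by_cases hmj : σ m = j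
        · rw [if_pos hmj] at hm
          rw [hmj] at hm ⊢
          linarith
        · rw [if_neg hmj, if_neg (hσne m hmm)] at hm
          exact hm
    -- assign v2 = castSucc i
    have hA2ne : A2.Nonempty := ⟨m₀, hm0A2⟩
    by_cases hAune : Au.Nonempty
    · -- get m₀ < min' Au from h
      have hA1ne : A1.Nonempty := ⟨m₀, hA1eq ▸ Finset.mem_insert_self _ _⟩
      have hassu : thresholdAssign k θ σ u = Fin.castSucc (σ (Au.min' hAune)) := by
        rw [thresholdAssign]; simp only [← hAu]; rw [dif_pos hAune]
      have hass1 : thresholdAssign k θ σ v1 = Fin.castSucc (σ (A1.min' hA1ne)) := by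
        rw [thresholdAssign]; simp only [← hA1]; rw [dif_pos hA1ne]
      have hlt : m₀ < Au.min' hAune := by
        by_contra hnlt
        push_neg at hnlt
        have h1 : Au.min' hAune = m₀ ∨ Au.min' hAune ∈ Au := Or.inr (Au.min'_mem hAune)
        -- min' A1 ∈ A1 = insert m₀ Au
        have hmem : A1.min' hA1ne ∈ insert m₀ Au := hA1eq ▸ A1.min'_mem hA1ne
        have hminle : A1.min' hA1ne ≤ Au.min' hAune :=
          Finset.min'_le _ _ (hA1eq ▸ Finset.mem_insert_of_mem (Au.min'_mem hAune))
        rcases Finset.mem_insert.mp hmem with h2 | h2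
        · -- min' A1 = m₀, m₀ ≤ min' Au ≤ m₀ → min' Au = m₀ ∈ Au contra
          have : Au.min' hAune = m₀ := le_antisymm hnlt (h2 ▸ hminle)
          exact hm0u (this ▸ Au.min'_mem hAune)
        · have : Au.min' hAune ≤ A1.min' hA1ne := Finset.min'_le _ _ h2
          have heqmin : A1.min' hA1ne = Au.min' hAune := le_antisymm hminle this
          exact h (by rw [hassu, hass1, heqmin])
      have hminA2 : A2.min' hA2ne = m₀ := by
        rcases hA2sub _ (A2.min'_mem hA2ne) with h2 | h2
        · exact h2
        · exfalso
          have h3 : Au.min' hAune ≤ A2.min' hA2ne := Finset.min'_le _ _ h2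
          have h4 : A2.min' hA2ne ≤ m₀ := Finset.min'_le _ _ hm0A2
          exact absurd (lt_of_lt_of_le hlt (le_trans h3 h4)) (lt_irrefl _)
      have hass2 : thresholdAssign k θ σ v2 = Fin.castSucc i := by
        rw [thresholdAssign]; simp only [← hA2]; rw [dif_pos hA2ne, hminA2, hσm₀]
      rw [hassu, hass2]
      intro hc
      have : σ (Au.min' hAune) = i := hcs hc
      have : Au.min' hAune = m₀ := by rw [hm₀, ← this, Equiv.symm_apply_apply]
      exact hm0u (this ▸ Au.min'_mem hAune)
    · -- Au empty: assign u = last, assign v2 = castSucc i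
      have hassu : thresholdAssign k θ σ u = Fin.last k := by
        rw [thresholdAssign]; simp only [← hAu]; rw [dif_neg hAune]
      have hminA2 : A2.min' hA2ne = m₀ := by
        rcases hA2sub _ (A2.min'_mem hA2ne) with h2 | h2
        · exact h2
        · exact absurd ⟨_, h2⟩ hAune
      have hass2 : thresholdAssign k θ σ v2 = Fin.castSucc i := by
        rw [thresholdAssign]; simp only [← hA2]; rw [dif_pos hA2ne, hminA2, hσm₀]
      rw [hassu, hass2]
      intro hc
      exact absurd hc.symm (Fin.castSucc_lt_last i).ne

/-- For an axis-aligned edge of type `(i, k+1)` at a point `u` of the simplex,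
the probability (over any threshold distribution `μ` and a uniformly random
order, here summed over all orders) that a threshold scheme separates its
endpoints is at most the corresponding probability for an edge of type `(i, j)`
with `j ≤ k` at the same location, since terminal `k+1` has no threshold. -/
theorem stmt12 (k : ℕ) (i j : Fin k) (hij : i ≠ j)
    (u : Fin (k + 1) → ℝ) (hu0 : ∀ m, 0 ≤ u m) (hu1 : ∑ m, u m = 1)
    (ε : ℝ) (hε : 0 ≤ ε) (hε1 : ε ≤ u (Fin.last k)) (hε2 : ε ≤ u (Fin.castSucc j))
    (μ : Measure (Fin k → ℝ)) [IsProbabilityMeasure μ] :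
    ∑ σ : Equiv.Perm (Fin k),
      (μ {θ | thresholdAssign k θ σ u ≠ thresholdAssign k θ σ
        (Function.update (Function.update u (Fin.castSucc i) (u (Fin.castSucc i) + ε))
          (Fin.last k) (u (Fin.last k) - ε))}).toReal
    ≤ ∑ σ : Equiv.Perm (Fin k),
      (μ {θ | thresholdAssign k θ σ u ≠ thresholdAssign k θ σ
        (Function.update (Function.update u (Fin.castSucc i) (u (Fin.castSucc i) + ε))
          (Fin.castSucc j) (u (Fin.castSucc j) - ε))}).toReal := by
  apply Finset.sum_le_sum
  intro σ _
  apply ENNReal.toReal_mono (measure_ne_top μ _)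
  apply measure_mono
  intro θ hθ
  exact aux_key k i j hij u ε hε σ θ hθ
end

section
/- In the Kleinberg–Tardos rounding for Uniform Metric Labeling, for any edge (u,v) with LP values x^u, x^v ∈ Δ_q, the probability that u and v receive different labels is at most ‖x^u − x^v‖_1 (equivalently at most 2 times the total variation distance), where the algorithm repeatedly picks a uniform label i ∈ [q] and threshold ρ ∈ [0,1] and assigns label i to every unassigned vertex w with x^w_i ≥ ρ. -/
/-!
Call a round decisive for `u, v` if it assigns at least one of them (`ρ ≤ max (x^u_i) (x^v_i)`)
and separating if it assigns exactly one (`min < ρ ≤ max`). The two labels can differ only if the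
first decisive round is separating. A round is decisive with probability at least `1/q`, since it
already assigns `u` with probability `(∑ i, x^u_i) / q = 1/q`, and separating with probability at
most `‖x^u - x^v‖₁ / q`; summing over the index `n` of the first decisive round gives at most
`∑ n, (1 - 1/q)^n ‖x^u - x^v‖₁ / q = ‖x^u - x^v‖₁`.
-/

open scoped Classical
open MeasureTheory ProbabilityTheory

/-- The label that the Kleinberg–Tardos process `ω` (an infinite sequence of
rounds `(i_n, ρ_n)`) assigns to a vertex with LP values `x`: the label `i_n`
of the first round `n` with `x_{i_n} ≥ ρ_n`, if such a round exists. -/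
noncomputable def ktLabel (q : ℕ) (x : Fin q → ℝ) (ω : ℕ → Fin q × ℝ) :
    Option (Fin q) :=
  if h : ∃ n, (ω n).2 ≤ x (ω n).1 then some (ω (Nat.find h)).1 else none

open scoped ENNReal
open Set

theorem ProbabilityTheory.iIndepFun.measure_exists_firstEntry_le {Ω α : Type*}
    [MeasurableSpace Ω] [MeasurableSpace α] {μ : Measure Ω} {X : ℕ → Ω → α}
    (hX : iIndepFun X μ) {A B : Set α} (hA : MeasurableSet A) (hB : MeasurableSet B)
    {a b : ℝ≥0∞} (ha : ∀ n, μ (X n ⁻¹' A) ≤ a) (hb : ∀ n, μ (X n ⁻¹' B) ≤ b) :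
    μ {ω | ∃ n, (∀ k < n, X k ω ∈ A) ∧ X n ω ∈ B} ≤ (1 - a)⁻¹ * b := by
  have hentry : ∀ n, μ {ω | (∀ k < n, X k ω ∈ A) ∧ X n ω ∈ B} ≤ a ^ n * b := by
    intro n
    have hinter : {ω | (∀ k < n, X k ω ∈ A) ∧ X n ω ∈ B}
        = ⋂ k ∈ Finset.range (n + 1), X k ⁻¹' (if k < n then A else B) := by
      ext ω
      simp only [mem_ofPred_eq, mem_iInter, Finset.mem_range, Nat.lt_succ_iff_lt_or_eq, or_imp,
        forall_and, forall_eq, lt_irrefl, if_false, mem_preimage]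
      exact and_congr (forall₂_congr fun k hk => by rw [if_pos hk]) Iff.rfl
    rw [hinter, hX.meas_biInter fun k _ => ⟨_, by split_ifs <;> assumption, rfl⟩,
      Finset.prod_range_succ, if_neg n.lt_irrefl]
    refine mul_le_mul' ?_ (hb n)
    calc ∏ k ∈ Finset.range n, μ (X k ⁻¹' if k < n then A else B)
        = ∏ k ∈ Finset.range n, μ (X k ⁻¹' A) :=
          Finset.prod_congr rfl fun k hk => by rw [if_pos (Finset.mem_range.1 hk)]
      _ ≤ a ^ n := by
          simpa using Finset.prod_le_pow_card (Finset.range n) _ a fun k _ => ha k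
  calc μ {ω | ∃ n, (∀ k < n, X k ω ∈ A) ∧ X n ω ∈ B}
      = μ (⋃ n, {ω | (∀ k < n, X k ω ∈ A) ∧ X n ω ∈ B}) := by rw [ofPred_exists]
    _ ≤ ∑' n, μ {ω | (∀ k < n, X k ω ∈ A) ∧ X n ω ∈ B} := measure_iUnion_le _
    _ ≤ ∑' n, a ^ n * b := ENNReal.tsum_le_tsum hentry
    _ = (1 - a)⁻¹ * b := by rw [ENNReal.tsum_mul_right, ENNReal.tsum_geometric]

theorem measurableSet_setOf_snd_mem {ι β : Type*} [MeasurableSpace ι] [Countable ι]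
    [MeasurableSingletonClass ι] [MeasurableSpace β] {T : ι → Set β}
    (hT : ∀ i, MeasurableSet (T i)) : MeasurableSet {p : ι × β | p.2 ∈ T p.1} :=
  measurableSet_setOfPred.2 <| measurable_from_prod_countable_right fun i =>
    measurableSet_setOfPred.1 (hT i)

theorem PMF.toMeasure_prod_apply_setOf_snd_mem {ι β : Type*} [Fintype ι] [MeasurableSpace ι]
    [MeasurableSingletonClass ι] [MeasurableSpace β] (p : PMF ι) (ν : Measure β) [SFinite ν]
    {T : ι → Set β} (hT : ∀ i, MeasurableSet (T i)) :
    (p.toMeasure.prod ν) {x | x.2 ∈ T x.1} = ∑ i, p i * ν (T i) := by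
  rw [Measure.prod_apply (measurableSet_setOf_snd_mem hT), lintegral_fintype]
  refine Finset.sum_congr rfl fun i _ => ?_
  rw [p.toMeasure_apply_singleton i (measurableSet_singleton i), mul_comm]
  rfl

instance : IsProbabilityMeasure (volume.restrict (Icc (0 : ℝ) 1)) :=
  ⟨by simp⟩

theorem volume_restrict_Icc_zero_one_Iic {c : ℝ} (hc : c ≤ 1) :
    volume.restrict (Icc (0 : ℝ) 1) (Iic c) = ENNReal.ofReal c := by
  rw [Measure.restrict_apply measurableSet_Iic, inter_comm, ← Ici_inter_Iic, inter_assoc,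
    Iic_inter_Iic, min_eq_right hc, Ici_inter_Iic, Real.volume_Icc, sub_zero]

section KleinbergTardos

variable {q : ℕ}

noncomputable def ktRoundLaw (q : ℕ) [NeZero q] : Measure (Fin q × ℝ) :=
  (PMF.uniformOfFintype (Fin q)).toMeasure.prod (volume.restrict (Icc (0 : ℝ) 1))

instance [NeZero q] : IsProbabilityMeasure (ktRoundLaw q) := by
  unfold ktRoundLaw; infer_instance

theorem ktRoundLaw_setOf_snd_mem [NeZero q] {T : Fin q → Set ℝ}
    (hT : ∀ i, MeasurableSet (T i)) :
    ktRoundLaw q {p | p.2 ∈ T p.1} =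
      (q : ℝ≥0∞)⁻¹ * ∑ i, volume.restrict (Icc (0 : ℝ) 1) (T i) := by
  rw [ktRoundLaw, PMF.toMeasure_prod_apply_setOf_snd_mem _ _ hT, Finset.mul_sum]
  simp only [PMF.uniformOfFintype_apply, Fintype.card_fin]

def ktAssignsEither (x y : Fin q → ℝ) : Set (Fin q × ℝ) :=
  {p | p.2 ∈ Iic (max (x p.1) (y p.1))}

def ktSeparates (x y : Fin q → ℝ) : Set (Fin q × ℝ) :=
  {p | p.2 ∈ Ioc (min (x p.1) (y p.1)) (max (x p.1) (y p.1))}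

theorem measurableSet_ktAssignsEither (x y : Fin q → ℝ) : MeasurableSet (ktAssignsEither x y) :=
  measurableSet_setOf_snd_mem (T := fun i => Iic (max (x i) (y i))) fun _ => measurableSet_Iic

theorem measurableSet_ktSeparates (x y : Fin q → ℝ) : MeasurableSet (ktSeparates x y) :=
  measurableSet_setOf_snd_mem (T := fun i => Ioc (min (x i) (y i)) (max (x i) (y i)))
    fun _ => measurableSet_Ioc

theorem ktRoundLaw_ktSeparates_le [NeZero q] (x y : Fin q → ℝ) :
    ktRoundLaw q (ktSeparates x y) ≤ (q : ℝ≥0∞)⁻¹ * ENNReal.ofReal (∑ i, |x i - y i|) := by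
  rw [ktSeparates, ktRoundLaw_setOf_snd_mem
    (T := fun i => Ioc (min (x i) (y i)) (max (x i) (y i))) fun _ => measurableSet_Ioc,
    ENNReal.ofReal_sum_of_nonneg fun i _ => abs_nonneg _]
  gcongr with i
  calc volume.restrict (Icc (0 : ℝ) 1) (Ioc (min (x i) (y i)) (max (x i) (y i)))
      ≤ volume (Ioc (min (x i) (y i)) (max (x i) (y i))) := Measure.restrict_le_self _
    _ = ENNReal.ofReal |x i - y i| := by rw [Real.volume_Ioc, max_sub_min_eq_abs, abs_sub_comm]

theorem ktRoundLaw_assigns_eq_inv [NeZero q] {x : Fin q → ℝ} (hx0 : ∀ i, 0 ≤ x i)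
    (hx1 : ∑ i, x i = 1) : ktRoundLaw q {p | p.2 ∈ Iic (x p.1)} = (q : ℝ≥0∞)⁻¹ := by
  have hle : ∀ i, x i ≤ 1 := fun i =>
    hx1 ▸ Finset.single_le_sum (fun j _ => hx0 j) (Finset.mem_univ i)
  rw [ktRoundLaw_setOf_snd_mem (T := fun i => Iic (x i)) fun _ => measurableSet_Iic]
  simp only [volume_restrict_Icc_zero_one_Iic (hle _)]
  rw [← ENNReal.ofReal_sum_of_nonneg fun i _ => hx0 i, hx1, ENNReal.ofReal_one, mul_one]

theorem ktRoundLaw_compl_ktAssignsEither_le [NeZero q] {x : Fin q → ℝ} (hx0 : ∀ i, 0 ≤ x i)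
    (hx1 : ∑ i, x i = 1) (y : Fin q → ℝ) :
    ktRoundLaw q (ktAssignsEither x y)ᶜ ≤ 1 - (q : ℝ≥0∞)⁻¹ := by
  rw [prob_compl_eq_one_sub (measurableSet_ktAssignsEither x y),
    ← ktRoundLaw_assigns_eq_inv hx0 hx1]
  gcongr
  exact fun p hp => le_trans (α := ℝ) hp (le_max_left _ _)

theorem ktLabel_eq_some {x : Fin q → ℝ} {ω : ℕ → Fin q × ℝ} {n : ℕ}
    (hmiss : ∀ k < n, x (ω k).1 < (ω k).2) (hhit : (ω n).2 ≤ x (ω n).1) :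
    ktLabel q x ω = some (ω n).1 := by
  have h : ∃ n, (ω n).2 ≤ x (ω n).1 := ⟨n, hhit⟩
  have hfind : Nat.find h = n :=
    le_antisymm (Nat.find_min' h hhit) (not_lt.1 fun hlt => (hmiss _ hlt).not_ge (Nat.find_spec h))
  rw [ktLabel, dif_pos h, hfind]

theorem ktLabel_eq_none {x : Fin q → ℝ} {ω : ℕ → Fin q × ℝ} (hmiss : ∀ n, x (ω n).1 < (ω n).2) :
    ktLabel q x ω = none := by
  rw [ktLabel, dif_neg fun ⟨n, hn⟩ => (hmiss n).not_ge hn]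

theorem exists_ktSeparates_of_ktLabel_ne {x y : Fin q → ℝ} {ω : ℕ → Fin q × ℝ}
    (h : ktLabel q x ω ≠ ktLabel q y ω) :
    ∃ n, (∀ k < n, ω k ∈ (ktAssignsEither x y)ᶜ) ∧ ω n ∈ ktSeparates x y := by
  simp only [ktAssignsEither, ktSeparates, mem_compl_iff, mem_ofPred_eq, mem_Iic, mem_Ioc,
    not_le, max_lt_iff] at h ⊢
  by_cases hhit : ∃ n, (ω n).2 ≤ max (x (ω n).1) (y (ω n).1)
  · have hmiss : ∀ k < Nat.find hhit, x (ω k).1 < (ω k).2 ∧ y (ω k).1 < (ω k).2 := fun k hk =>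
      max_lt_iff.1 (not_le.1 (Nat.find_min hhit hk))
    refine ⟨Nat.find hhit, hmiss, ?_, Nat.find_spec hhit⟩
    by_contra! hboth
    rw [le_min_iff] at hboth
    exact h <| (ktLabel_eq_some (fun k hk => (hmiss k hk).1) hboth.1).trans
      (ktLabel_eq_some (fun k hk => (hmiss k hk).2) hboth.2).symm
  · push Not at hhit
    exact absurd ((ktLabel_eq_none fun n => (max_lt_iff.1 (hhit n)).1).trans
      (ktLabel_eq_none fun n => (max_lt_iff.1 (hhit n)).2).symm) h

end KleinbergTardos

theorem stmt13_general (q : ℕ) [NeZero q] (xu xv : Fin q → ℝ)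
    (hxu0 : ∀ i, 0 ≤ xu i) (hxu1 : ∑ i, xu i = 1)
    (μ : Measure (ℕ → Fin q × ℝ))
    (hindep : iIndepFun (fun n (ω : ℕ → Fin q × ℝ) => ω n) μ)
    (hdist : ∀ n, μ.map (fun ω => ω n) =
      ((PMF.uniformOfFintype (Fin q)).toMeasure).prod
        (volume.restrict (Set.Icc (0 : ℝ) 1))) :
    (μ {ω | ktLabel q xu ω ≠ ktLabel q xv ω}).toReal ≤ ∑ i, |xu i - xv i| := by
  have hlaw : ∀ n B, MeasurableSet B → μ ((fun ω => ω n) ⁻¹' B) = ktRoundLaw q B :=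
    fun n B hB => by rw [← Measure.map_apply (measurable_pi_apply n) hB, hdist n, ktRoundLaw]
  have hq : (q : ℝ≥0∞)⁻¹ ≤ 1 := ENNReal.inv_le_one.2 (Nat.one_le_cast.2 (NeZero.one_le))
  have hbound : μ {ω | ktLabel q xu ω ≠ ktLabel q xv ω} ≤ ENNReal.ofReal (∑ i, |xu i - xv i|) :=
    calc μ {ω | ktLabel q xu ω ≠ ktLabel q xv ω}
        ≤ μ {ω | ∃ n, (∀ k < n, ω k ∈ (ktAssignsEither xu xv)ᶜ) ∧ ω n ∈ ktSeparates xu xv} :=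
          measure_mono fun _ => exists_ktSeparates_of_ktLabel_ne
      _ ≤ (1 - (1 - (q : ℝ≥0∞)⁻¹))⁻¹ * ((q : ℝ≥0∞)⁻¹ * ENNReal.ofReal (∑ i, |xu i - xv i|)) :=
          hindep.measure_exists_firstEntry_le (measurableSet_ktAssignsEither xu xv).compl
            (measurableSet_ktSeparates xu xv)
            (fun n => (hlaw n _ (measurableSet_ktAssignsEither xu xv).compl).trans_le
              (ktRoundLaw_compl_ktAssignsEither_le hxu0 hxu1 xv))
            (fun n => (hlaw n _ (measurableSet_ktSeparates xu xv)).trans_le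
              (ktRoundLaw_ktSeparates_le xu xv))
      _ = ENNReal.ofReal (∑ i, |xu i - xv i|) := by
          rw [ENNReal.sub_sub_cancel ENNReal.one_ne_top hq, inv_inv, ← mul_assoc,
            ENNReal.mul_inv_cancel (NeZero.ne _) (ENNReal.natCast_ne_top q), one_mul]
  exact ENNReal.toReal_le_of_le_ofReal (Finset.sum_nonneg fun i _ => abs_nonneg _) hbound

/-- Kleinberg–Tardos rounding: if the rounds are i.i.d. with `i_n` uniform on
`[q]` and `ρ_n` uniform on `[0,1]`, then for two vertices with LP values
`xu, xv ∈ Δ_q` the probability of receiving different labels is at most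
`‖xu − xv‖₁`. -/
theorem stmt13 (q : ℕ) [NeZero q] (xu xv : Fin q → ℝ)
    (hxu0 : ∀ i, 0 ≤ xu i) (hxu1 : ∑ i, xu i = 1)
    (hxv0 : ∀ i, 0 ≤ xv i) (hxv1 : ∑ i, xv i = 1)
    (μ : Measure (ℕ → Fin q × ℝ)) [IsProbabilityMeasure μ]
    (hindep : iIndepFun (fun n (ω : ℕ → Fin q × ℝ) => ω n) μ)
    (hdist : ∀ n, μ.map (fun ω => ω n) =
      ((PMF.uniformOfFintype (Fin q)).toMeasure).prod
        (volume.restrict (Set.Icc (0 : ℝ) 1))) :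
    (μ {ω | ktLabel q xu ω ≠ ktLabel q xv ω}).toReal ≤ ∑ i, |xu i - xv i| :=
  stmt13_general q xu xv hxu0 hxu1 μ hindep hdist
end

section
/- In a Gomory–Hu tree H of G with weights w_H, for any edge set F ⊆ E(H), the union of the cuts U(e) in G over e ∈ F has w-weight at most Σ_{e∈F} w_H(e), and separates (in G) every pair of vertices that F separates in H. -/
open scoped Classical

/-!
The weight bound is the union bound for nonnegative weights. For separation, an edge `xz` of `G`
outside every cut `U e`, `e ∈ F`, has both ends on the same side of each `e ∈ F` in `H`. Any edge
of `F` on the tree path from `x` to `z` would be a bridge with `x` and `z` on the same side, which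
is impossible; so that path survives in `H - F`, and walks in `G` avoiding the cuts project to
walks in `H - F`.
-/

theorem Finset.sum_biUnion_le_sum_sum_s17 {ι α M : Type*} [DecidableEq α] [AddCommMonoid M]
    [PartialOrder M] [IsOrderedAddMonoid M] {f : α → M} (hf : ∀ x, 0 ≤ f x)
    (s : Finset ι) (t : ι → Finset α) :
    ∑ x ∈ s.biUnion t, f x ≤ ∑ i ∈ s, ∑ x ∈ t i, f x := by
  have himage : s.biUnion t = (s.sigma t).image Sigma.snd := by
    ext x
    simp
  calc ∑ x ∈ s.biUnion t, f x = ∑ x ∈ (s.sigma t).image Sigma.snd, f x := by rw [himage]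
    _ ≤ ∑ p ∈ s.sigma t, f p.2 := Finset.sum_image_le_of_nonneg fun x _ => hf x
    _ = ∑ i ∈ s, ∑ x ∈ t i, f x := Finset.sum_sigma s t fun p => f p.2

theorem mem_iff_mem_of_adj_of_notMem_boundary {V : Type*} [Fintype V] [DecidableEq V]
    {G : SimpleGraph V} {S : Set V} {x z : V} (hxz : G.Adj x z)
    (hnot : s(x, z) ∉ boundary G S) : x ∈ S ↔ z ∈ S := by
  simp only [boundary, Finset.mem_filter, Finset.mem_univ, true_and, SimpleGraph.mem_edgeSet,
    hxz, not_exists, not_and, Set.mem_compl_iff] at hnot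
  constructor
  · intro hx
    by_contra hz
    exact hnot x hx z hz rfl
  · intro hz
    by_contra hx
    exact hnot z hz x hx Sym2.eq_swap

namespace SimpleGraph

variable {V : Type*} {G H : SimpleGraph V}

theorem Reachable.of_forall_adj_reachable (hGH : ∀ x y, G.Adj x y → H.Reachable x y) {u v : V}
    (huv : G.Reachable u v) : H.Reachable u v := by
  rw [reachable_iff_reflTransGen] at huv ⊢
  exact huv.lift' id fun x y hxy => (reachable_iff_reflTransGen x y).mp (hGH x y hxy)

theorem IsAcyclic.not_reachable_deleteEdges_of_adj (hH : H.IsAcyclic) {u v : V}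
    (huv : H.Adj u v) : ¬ (H.deleteEdges {s(u, v)}).Reachable u v :=
  isBridge_iff.mp (isAcyclic_iff_forall_adj_isBridge.mp hH huv)

theorem Walk.IsPath.reachable_deleteEdges_of_cons {u v w : V} {huv : H.Adj u v}
    {q : H.Walk v w} (hp : (Walk.cons huv q).IsPath) :
    (H.deleteEdges {s(u, v)}).Reachable v w := by
  refine ⟨q.toDeleteEdges _ fun e he hee => ?_⟩
  rw [Set.mem_singleton_iff] at hee
  subst hee
  exact (Walk.cons_isPath_iff huv q).mp hp |>.2 (q.fst_mem_support_of_mem_edges he)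

theorem IsAcyclic.reachable_deleteEdges_of_isPath (hH : H.IsAcyclic) {F : Set (Sym2 V)}
    {x y : V} {p : H.Walk x y} (hp : p.IsPath)
    (hside : ∀ a b, H.Adj a b → s(a, b) ∈ F →
      ((H.deleteEdges {s(a, b)}).Reachable a x ↔ (H.deleteEdges {s(a, b)}).Reachable a y)) :
    (H.deleteEdges F).Reachable x y := by
  induction p with
  | nil => rfl
  | @cons u v y huv q ih =>
    have hq : (H.deleteEdges {s(u, v)}).Reachable v y := hp.reachable_deleteEdges_of_cons
    by_cases huvF : s(u, v) ∈ F
    · have huy := (hside u v huv huvF).mp .rfl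
      exact absurd (huy.trans hq.symm) (hH.not_reachable_deleteEdges_of_adj huv)
    · refine (deleteEdges_adj.mpr ⟨huv, huvF⟩).reachable.trans
        (ih hp.of_cons fun a b hab habF => ?_)
      have huv' : (H.deleteEdges {s(a, b)}).Adj u v :=
        deleteEdges_adj.mpr ⟨huv, fun h => huvF (Set.mem_singleton_iff.mp h ▸ habF)⟩
      rw [← hside a b hab habF]
      exact ⟨fun hav => hav.trans huv'.reachable.symm, fun hau => hau.trans huv'.reachable⟩

end SimpleGraph

/-- In a Gomory–Hu tree `H` of `G` (each tree edge `s(a,b)` corresponds to the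
cut `U s(a,b)` of `G` given by the boundary of the side of `a` in `H - s(a,b)`,
of weight `wH s(a,b)`), for any `F ⊆ E(H)` the union of the cuts `U e`, `e ∈ F`,
has `w`-weight at most `∑_{e ∈ F} wH e` and separates in `G` every pair of
vertices that `F` separates in `H`. -/
theorem stmt17 {V : Type*} [Fintype V] [DecidableEq V] (G H : SimpleGraph V)
    (w wH : Sym2 V → ℝ) (hw : ∀ e, 0 ≤ w e) (hH : H.IsTree)
    (U : Sym2 V → Finset (Sym2 V))
    (hside : ∀ a b : V, H.Adj a b →
      U s(a, b) = boundary G {v | (H.deleteEdges {s(a, b)}).Reachable a v} ∧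
      ∑ e ∈ U s(a, b), w e = wH s(a, b))
    (F : Finset (Sym2 V)) (hF : ↑F ⊆ H.edgeSet) :
    (∑ e ∈ F.biUnion U, w e ≤ ∑ e ∈ F, wH e) ∧
    (∀ u v : V, ¬ (H.deleteEdges ↑F).Reachable u v →
      ¬ (G.deleteEdges ↑(F.biUnion U)).Reachable u v) := by
  have hweight : ∀ e ∈ F, ∑ x ∈ U e, w x = wH e := by
    intro e he
    induction e using Sym2.ind with
    | _ a b => exact (hside a b (hF he)).2
  refine ⟨(Finset.sum_biUnion_le_sum_sum_s17 hw F U).trans_eq (Finset.sum_congr rfl hweight), ?_⟩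
  intro u v hsep hreach
  refine hsep (hreach.of_forall_adj_reachable fun x z hxz => ?_)
  obtain ⟨hGxz, hxzU⟩ := SimpleGraph.deleteEdges_adj.mp hxz
  obtain ⟨p, hp, -⟩ := hH.existsUnique_path x z
  refine hH.isAcyclic.reachable_deleteEdges_of_isPath hp fun a b hab habF => ?_
  have hcut : s(x, z) ∉ U s(a, b) := fun h =>
    hxzU (Finset.mem_coe.mpr (Finset.mem_biUnion.mpr ⟨_, habF, h⟩))
  rw [(hside a b hab).1] at hcut
  exact (mem_iff_mem_of_adj_of_notMem_boundary hGxz hcut :)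
end
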